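/- arXiv:math/0701936 — 9 statements merged into one kernel-verified Lean document; each statement's English description precedes it below -/
import Mathlib

section
/- Let M be an almost triangular matrix of size n+1 over an associative ring R (i.e., M_{ij} = 0 for i > j+1 and M_{j+1,j} = -1). Define P_0 = 1 and P_{j+1} = Σ_{i=0}^{j} M_{ij} P_i. Then P_{n+1} = det_right(M). -/
/-!
In the expansion of `detRight M` only permutations with `σ k ≤ k + 1` contribute, because
`M` vanishes below the subdiagonal. Such a permutation sends the last index `n` to some `i`, is
forced to be the cycle `(i i+1 … n)` on `[i, n]` (an index `k ∈ [i, n)` with `σ k ≤ k` would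
make `σ` map `[0, k]` onto itself), and restricts to an arbitrary permutation `τ` of `[0, i)`.
Its term is `M i n` times `(-1)^(n-i)` (the subdiagonal entries) times the sign
`(-1)^(n-i) sign τ` times the term of `τ` in the right determinant of the leading `i × i` block;
the signs are central and cancel. So the right determinants of the leading blocks satisfy the
recursion defining `P`.
-/

/-- The right determinant of a square matrix over a (possibly noncommutative) ring. -/
def detRight {R : Type*} [Ring R] {n : ℕ} (M : Matrix (Fin (n+1)) (Fin (n+1)) R) : R :=
  ∑ σ : Equiv.Perm (Fin (n+1)),
    (Equiv.Perm.sign σ : ℤ) • (List.ofFn (fun k : Fin (n+1) => M (σ k.rev) k.rev)).prod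

open Equiv

section
variable {m : ℕ}

def extendByCycle (i : Fin (m + 1)) (τ : Perm (Fin i)) : Perm (Fin (m + 1)) :=
  Fin.cycleIcc i (Fin.last m) * τ.extendDomain (Fin.castLEquiv i.isLt.le)

variable (i : Fin (m + 1)) (τ : Perm (Fin i))

lemma extendByCycle_castLE (k : Fin i) :
    extendByCycle i τ (Fin.castLE i.isLt.le k) = Fin.castLE i.isLt.le (τ k) := by
  have : Fin.castLE i.isLt.le k = (Fin.castLEquiv i.isLt.le k : Fin (m + 1)) := rfl
  rw [extendByCycle, Perm.mul_apply, this, Perm.extendDomain_apply_image]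
  exact Fin.cycleIcc_of_lt (by simp [Fin.lt_def])

lemma extendByCycle_of_le (k : Fin (m + 1)) (hk : i ≤ k) :
    extendByCycle i τ k = Fin.cycleIcc i (Fin.last m) k := by
  rw [extendByCycle, Perm.mul_apply, Perm.extendDomain_apply_not_subtype]
  simp only [not_lt]; exact hk

lemma extendByCycle_last : extendByCycle i τ (Fin.last m) = i := by
  rw [extendByCycle_of_le _ _ _ (Fin.le_last i), Fin.cycleIcc_of_last (Fin.le_last i)]

lemma extendByCycle_of_le_of_lt (k : Fin (m + 1)) (hik : i ≤ k) (hk : k < Fin.last m) :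
    extendByCycle i τ k = k + 1 := by
  rw [extendByCycle_of_le _ _ _ hik, Fin.cycleIcc_of_ge_of_lt hik hk]

lemma sign_extendByCycle :
    Perm.sign (extendByCycle i τ) = (-1) ^ (m - i : ℕ) * Perm.sign τ := by
  rw [extendByCycle, map_mul, Fin.sign_cycleIcc_of_le (Fin.le_last i), Perm.sign_extendDomain,
    Fin.val_last]

lemma extendByCycle_sigma_injective :
    Function.Injective fun p : Σ i : Fin (m + 1), Perm (Fin i) => extendByCycle p.1 p.2 := by
  rintro ⟨i, τ⟩ ⟨i', τ'⟩ h
  obtain rfl : i = i' := by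
    simpa only [extendByCycle_last] using Perm.congr_fun h (Fin.last m)
  obtain rfl : τ = τ' := Perm.extendDomainHom_injective _ (mul_left_cancel h)
  rfl

lemma apply_eq_add_one_of_apply_last_le {σ : Perm (Fin (m + 1))}
    (hσ : ∀ k, (σ k : ℕ) ≤ k + 1) {k : Fin (m + 1)} (hk : σ (Fin.last m) ≤ k)
    (hkm : k < Fin.last m) :
    (σ k : ℕ) = k + 1 := by
  by_contra hne
  have hmaps : (Finset.Iic k).map σ.toEmbedding ⊆ Finset.Iic k := by
    intro y hy
    obtain ⟨x, hx, rfl⟩ := Finset.mem_map.mp hy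
    rw [Equiv.coe_toEmbedding, Finset.mem_Iic, Fin.le_def] at *
    rcases hx.eq_or_lt with hx | hx
    · rw [Fin.ext hx]; have := hσ k; omega
    · have := hσ x; omega
  have : σ (Fin.last m) ∈ (Finset.Iic k).map σ.toEmbedding := by
    rw [Finset.map_eq_of_subset hmaps]; exact Finset.mem_Iic.mpr hk
  obtain ⟨x, hx, hσx⟩ := Finset.mem_map.mp this
  rw [σ.injective hσx, Finset.mem_Iic] at hx
  exact absurd hkm (not_lt.mpr hx)

lemma exists_extendByCycle_eq {σ : Perm (Fin (m + 1))} (hσ : ∀ k, (σ k : ℕ) ≤ k + 1) :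
    ∃ τ, extendByCycle (σ (Fin.last m)) τ = σ := by
  set i := σ (Fin.last m)
  set π := (Fin.cycleIcc i (Fin.last m))⁻¹ * σ
  have hfix : ∀ x : Fin (m + 1), ¬ (x : ℕ) < i → π x = x := by
    intro x hx
    rw [Perm.mul_apply, Perm.inv_eq_iff_eq]
    rcases (Fin.le_last x).eq_or_lt with rfl | hxm
    · exact (Fin.cycleIcc_of_last (Fin.le_last i)).symm
    · rw [Fin.cycleIcc_of_ge_of_lt (not_lt.mp hx) hxm]
      exact Fin.ext (by rw [apply_eq_add_one_of_apply_last_le hσ (not_lt.mp hx) hxm,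
        Fin.val_add_one_of_lt hxm])
  have hπ : ∀ x, (π x : ℕ) < i ↔ (x : ℕ) < i := by
    intro x
    by_cases hx : (x : ℕ) < i
    · exact iff_of_true (by_contra fun h => h (by rwa [π.injective (hfix _ h)])) hx
    · rw [hfix x hx]
  let τ := (Fin.castLEquiv i.isLt.le).permCongr.symm (π.subtypePerm hπ)
  have hτ : τ.extendDomain (Fin.castLEquiv i.isLt.le) = π := by
    refine Equiv.ext fun x => ?_
    by_cases hx : (x : ℕ) < i
    · rw [Perm.extendDomain_apply_subtype _ _ (b := x) hx]
      simp [τ, Equiv.permCongr_apply]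
    · rw [Perm.extendDomain_apply_not_subtype _ _ (b := x) hx, hfix x hx]
  exact ⟨τ, by rw [extendByCycle, hτ, mul_inv_cancel_left]⟩

end

section
variable {R : Type*} [Ring R]

lemma prod_ofFn_rev_succ {m : ℕ} (g : Fin (m + 1) → R) :
    (List.ofFn fun k => g k.rev).prod
      = g (Fin.last m) * (List.ofFn fun k => g k.rev.castSucc).prod := by
  rw [List.ofFn_succ, List.prod_cons, Fin.rev_zero]
  simp only [Fin.rev_succ]

lemma prod_ofFn_rev_eq_neg_one_pow_mul {m i : ℕ} (hi : i ≤ m) (g : Fin m → R)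
    (hg : ∀ k : Fin m, i ≤ k → g k = -1) :
    (List.ofFn fun k => g k.rev).prod
      = (-1) ^ (m - i) * (List.ofFn fun k : Fin i => g (Fin.castLE hi k.rev)).prod := by
  induction m with
  | zero => obtain rfl := Nat.le_zero.mp hi; simp
  | succ m ih =>
    rcases hi.eq_or_lt with rfl | hi
    · simp
    rw [prod_ofFn_rev_succ, hg _ (by simp; omega), ih (by omega) _ fun k hk => hg _ hk,
      ← mul_assoc, ← pow_succ', Nat.sub_add_comm (by omega)]
    rfl

-- `detRight` for every size, so that the empty leading block has right determinant `1`.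
def detRight' {m : ℕ} (N : Matrix (Fin m) (Fin m) R) : R :=
  ∑ σ : Perm (Fin m), (Perm.sign σ : ℤ) • (List.ofFn fun k => N (σ k.rev) k.rev).prod

lemma sign_smul_prod_extendByCycle {m : ℕ} (N : Matrix (Fin (m + 1)) (Fin (m + 1)) R)
    (hsub : ∀ i j : Fin (m + 1), (i : ℕ) = j + 1 → N i j = -1)
    (i : Fin (m + 1)) (τ : Perm (Fin i)) :
    (Perm.sign (extendByCycle i τ) : ℤ) •
        (List.ofFn fun k => N (extendByCycle i τ k.rev) k.rev).prod
      = N i (Fin.last m) * ((Perm.sign τ : ℤ) • (List.ofFn fun k =>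
          N (Fin.castLE i.isLt.le (τ k.rev)) (Fin.castLE i.isLt.le k.rev)).prod) := by
  have hcycle : ∀ k : Fin m, (i : ℕ) ≤ k →
      N (extendByCycle i τ k.castSucc) k.castSucc = -1 := by
    intro k hk
    rw [extendByCycle_of_le_of_lt i τ _ hk (Fin.castSucc_lt_last k)]
    exact hsub _ _ (by simp)
  rw [prod_ofFn_rev_succ (fun k => N (extendByCycle i τ k) k), extendByCycle_last,
    prod_ofFn_rev_eq_neg_one_pow_mul (Fin.is_le i) (fun k => N _ (Fin.castSucc k)) hcycle,
    sign_extendByCycle]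
  simp only [Fin.castSucc_castLE, extendByCycle_castLE]
  set x := (List.ofFn fun k =>
    N (Fin.castLE i.isLt.le (τ k.rev)) (Fin.castLE i.isLt.le k.rev)).prod
  set u : ℤ := (-1) ^ (m - i : ℕ)
  have hu : u * u = 1 := by rw [← mul_pow]; simp
  have : ((-1 : R) ^ (m - i : ℕ)) * x = u • x := by simp [u, zsmul_eq_mul]
  push_cast
  rw [this, mul_smul_comm, smul_smul, ← mul_smul_comm, mul_right_comm, hu, one_mul]

theorem detRight'_eq_sum_mul_detRight'_castLE {m : ℕ}
    (N : Matrix (Fin (m + 1)) (Fin (m + 1)) R)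
    (hlow : ∀ i j : Fin (m + 1), (j : ℕ) + 1 < i → N i j = 0)
    (hsub : ∀ i j : Fin (m + 1), (i : ℕ) = j + 1 → N i j = -1) :
    detRight' N = ∑ i : Fin (m + 1), N i (Fin.last m) *
      detRight' (N.submatrix (Fin.castLE i.isLt.le) (Fin.castLE i.isLt.le)) := by
  have hvanish : ∀ σ : Perm (Fin (m + 1)),
      (∀ p : Σ i : Fin (m + 1), Perm (Fin i), extendByCycle p.1 p.2 ≠ σ) →
      (Perm.sign σ : ℤ) • (List.ofFn fun k => N (σ k.rev) k.rev).prod = 0 := by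
    intro σ hσ
    obtain ⟨k, hk⟩ : ∃ k : Fin (m + 1), (k : ℕ) + 1 < σ k := by
      by_contra! h
      obtain ⟨τ, hτ⟩ := exists_extendByCycle_eq h
      exact hσ ⟨_, τ⟩ hτ
    refine smul_eq_zero_of_right _ (List.prod_eq_zero (List.mem_ofFn.mpr ⟨k.rev, ?_⟩))
    simpa using hlow _ _ hk
  rw [detRight', ← Finset.sum_of_injOn
    (fun p : Σ i : Fin (m + 1), Perm (Fin i) => extendByCycle p.1 p.2)
    extendByCycle_sigma_injective.injOn (fun _ _ => Finset.mem_coe.mpr (Finset.mem_univ _))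
    (fun σ _ hσ => hvanish σ fun p hp => hσ ⟨p, Finset.mem_coe.mpr (Finset.mem_univ p), hp⟩)
    (fun _ _ => rfl), Fintype.sum_sigma]
  simp only [sign_smul_prod_extendByCycle N hsub, detRight', Finset.mul_sum]
  rfl

end

/-- For an almost triangular matrix `M` (`M_{ij} = 0` for `i > j+1`, `M_{j+1,j} = -1`),
the recursion `P_0 = 1`, `P_{j+1} = Σ_{i=0}^{j} M_{ij} P_i` computes `det_right(M)`:
`P_{n+1} = det_right(M)`. -/
theorem stmt2 {R : Type*} [Ring R] {n : ℕ} (M : Matrix (Fin (n+1)) (Fin (n+1)) R)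
    (hlow : ∀ i j : Fin (n+1), (j : ℕ) + 1 < (i : ℕ) → M i j = 0)
    (hsub : ∀ i j : Fin (n+1), (i : ℕ) = (j : ℕ) + 1 → M i j = -1)
    (P : ℕ → R) (hP0 : P 0 = 1)
    (hP : ∀ j : ℕ, (hj : j < n + 1) →
      P (j + 1) = ∑ i : Fin (j + 1),
        M ⟨i, lt_of_lt_of_le i.isLt (Nat.succ_le_of_lt hj)⟩ ⟨j, hj⟩ * P i) :
    P (n + 1) = detRight M := by
  have hlead : ∀ j (hj : j ≤ n + 1),
      P j = detRight' (M.submatrix (Fin.castLE hj) (Fin.castLE hj)) := by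
    intro j
    induction j using Nat.strong_induction_on with
    | _ j ih =>
      rcases j with _ | j
      · intro _
        simp [hP0, detRight']
      · intro hj
        rw [hP j hj, detRight'_eq_sum_mul_detRight'_castLE
          (M.submatrix (Fin.castLE hj) (Fin.castLE hj)) (fun _ _ h => hlow _ _ h)
          (fun _ _ h => hsub _ _ h)]
        refine Finset.sum_congr rfl fun i _ => ?_
        rw [ih i (by omega) (by omega)]
        rfl
  rw [hlead (n + 1) le_rfl]
  simp [detRight', detRight]
end

section
/- Let M be an almost triangular matrix of size n+1 over an associative ring R. Define Q_0 = 1 and Q_{j+1} = Σ_{i=0}^{j} Q_i M_{n-j, n-i}. Then Q_{n+1} = det_right(M). -/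
open Equiv Finset

section

variable {R : Type*} [Ring R]

lemma prod_ofFn_rev_succ_s3 {M : Type*} [Monoid M] {n : ℕ} (f : Fin (n + 1) → M) :
    (List.ofFn fun k => f k.rev).prod = (List.ofFn fun k : Fin n => f k.rev.succ).prod * f 0 := by
  rw [List.ofFn_succ', List.prod_concat, Fin.rev_last]
  simp only [Fin.rev_castSucc]

lemma detRight_fin_one (M : Matrix (Fin 1) (Fin 1) R) : detRight M = M 0 0 := by
  simp [detRight]

lemma detRight_eq_sum_col_zero {n : ℕ} (M : Matrix (Fin (n + 2)) (Fin (n + 2)) R) :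
    detRight M = ∑ p : Fin (n + 2), ((if p = 0 then 1 else -1 : ℤˣ) : ℤ) •
      (detRight (M.submatrix (swap 0 p ∘ Fin.succ) Fin.succ) * M p 0) := by
  rw [detRight, ← (Perm.decomposeFin (n := n + 1)).symm.sum_comp, Fintype.sum_prod_type]
  refine sum_congr rfl fun p _ => ?_
  simp only [detRight, sum_mul, smul_sum, Perm.decomposeFin.symm_sign, Units.val_mul, mul_smul,
    smul_mul_assoc, prod_ofFn_rev_succ_s3 (fun k => M _ k), Perm.decomposeFin_symm_apply_zero,
    Perm.decomposeFin_symm_apply_succ, Matrix.submatrix_apply, Function.comp_apply]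

lemma Fin.one_succAbove_of_ne_zero {n : ℕ} {a : Fin (n + 1)} (ha : a ≠ 0) :
    (1 : Fin (n + 2)).succAbove a = a.succ := by
  obtain ⟨b, rfl⟩ := Fin.exists_succ_eq.mpr ha
  exact Fin.one_succAbove_succ b

lemma swap_zero_one_succ {n : ℕ} (x : Fin (n + 1)) :
    swap (0 : Fin (n + 2)) 1 x.succ = (1 : Fin (n + 2)).succAbove x := by
  cases x using Fin.cases with
  | zero => simp
  | succ y =>
    rw [Fin.one_succAbove_succ]
    exact swap_apply_of_ne_of_ne (Fin.succ_ne_zero _) (by simp [Fin.ext_iff])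

def IsAlmostTriangular {m : ℕ} (M : Matrix (Fin m) (Fin m) R) : Prop :=
  (∀ i j : Fin m, (j : ℕ) + 1 < i → M i j = 0) ∧ ∀ i j : Fin m, (i : ℕ) = j + 1 → M i j = -1

namespace IsAlmostTriangular

variable {m k : ℕ} {M : Matrix (Fin m) (Fin m) R}

lemma submatrix (hM : IsAlmostTriangular M) {f g : Fin k → Fin m}
    (hfg : ∀ i j : Fin k, (j : ℕ) < i → (f i : ℕ) + j = g j + i) :
    IsAlmostTriangular (M.submatrix f g) :=
  ⟨fun i j h => hM.1 _ _ (by have := hfg i j (by omega); omega),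
    fun i j h => hM.2 _ _ (by have := hfg i j (by omega); omega)⟩

lemma submatrix_succ_succ {n : ℕ} {M : Matrix (Fin (n + 2)) (Fin (n + 2)) R}
    (hM : IsAlmostTriangular M) : IsAlmostTriangular (M.submatrix Fin.succ Fin.succ) :=
  hM.submatrix fun i j _ => by simp only [Fin.val_succ]; omega

lemma submatrix_succAbove_one_succ {n : ℕ} {M : Matrix (Fin (n + 2)) (Fin (n + 2)) R}
    (hM : IsAlmostTriangular M) :
    IsAlmostTriangular (M.submatrix (Fin.succAbove 1) Fin.succ) :=
  hM.submatrix fun i j hij => by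
    rw [Fin.one_succAbove_of_ne_zero (Fin.ne_zero_of_lt hij)]
    simp only [Fin.val_succ]; omega

lemma detRight_eq {n : ℕ} {M : Matrix (Fin (n + 2)) (Fin (n + 2)) R}
    (hM : IsAlmostTriangular M) :
    detRight M = detRight (M.submatrix Fin.succ Fin.succ) * M 0 0
      + detRight (M.submatrix (Fin.succAbove 1) Fin.succ) := by
  have hrows : ∀ p : Fin n, M p.succ.succ 0 = 0 := fun p => hM.1 _ _ (by simp)
  rw [detRight_eq_sum_col_zero, Fin.sum_univ_succ, Fin.sum_univ_succ]
  simp [hrows, hM.2 1 0 rfl, swap_zero_one_succ, Function.comp_def]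

end IsAlmostTriangular

lemma recursion_of_submatrix {n : ℕ} {M : Matrix (Fin (n + 2)) (Fin (n + 2)) R}
    {N : Matrix (Fin (n + 1)) (Fin (n + 1)) R} (hN : ∀ a b, a ≠ 0 → N a b = M a.succ b.succ)
    {Q : ℕ → R} (hQ : ∀ j < n + 1, Q (j + 1) =
      ∑ i : Fin (j + 1), Q i * M ⟨n + 1 - j, by omega⟩ ⟨n + 1 - i, by omega⟩) :
    ∀ j < n, Q (j + 1) = ∑ i : Fin (j + 1), Q i * N ⟨n - j, by omega⟩ ⟨n - i, by omega⟩ := by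
  intro j hj
  rw [hQ j (by omega)]
  refine sum_congr rfl fun i _ => ?_
  rw [hN _ _ (by simp [Fin.ext_iff]; omega)]
  congr 2 <;> ext <;> simp <;> omega

theorem IsAlmostTriangular.sum_mul_zero_rev_eq_detRight : ∀ {n : ℕ}
    {M : Matrix (Fin (n + 1)) (Fin (n + 1)) R}, IsAlmostTriangular M → ∀ {Q : ℕ → R}, Q 0 = 1 →
    (∀ j < n, Q (j + 1) = ∑ i : Fin (j + 1), Q i * M ⟨n - j, by omega⟩ ⟨n - i, by omega⟩) →
    ∑ i : Fin (n + 1), Q i * M 0 i.rev = detRight M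
  | 0, M, _, Q, hQ0, _ => by simp [hQ0, detRight_fin_one]
  | n + 1, M, hM, Q, hQ0, hQ => by
    have hM' := hM.submatrix_succ_succ.sum_mul_zero_rev_eq_detRight hQ0
      (recursion_of_submatrix (fun _ _ _ => rfl) hQ)
    have hM'' := hM.submatrix_succAbove_one_succ.sum_mul_zero_rev_eq_detRight hQ0
      (recursion_of_submatrix (fun a _ ha => by simp [Fin.one_succAbove_of_ne_zero ha]) hQ)
    have hrow1 : ∑ i : Fin (n + 1), Q i * M 1 i.rev.succ = Q (n + 1) := by
      rw [hQ n (by omega)]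
      refine sum_congr rfl fun i _ => ?_
      congr 2 <;> ext <;> simp
      omega
    rw [hM.detRight_eq, ← hM', ← hM'', Fin.sum_univ_castSucc, add_comm]
    simp only [Matrix.submatrix_apply, Fin.one_succAbove_zero, Fin.succ_zero_eq_one, hrow1,
      Fin.val_last, Fin.rev_last, Fin.val_castSucc, Fin.rev_castSucc]

end

/-- For an almost triangular matrix `M`, the recursion
`Q_0 = 1`, `Q_{j+1} = Σ_{i=0}^{j} Q_i M_{n-j,n-i}` satisfies `Q_{n+1} = det_right(M)`. -/
theorem stmt3 {R : Type*} [Ring R] {n : ℕ} (M : Matrix (Fin (n+1)) (Fin (n+1)) R)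
    (hlow : ∀ i j : Fin (n+1), (j : ℕ) + 1 < (i : ℕ) → M i j = 0)
    (hsub : ∀ i j : Fin (n+1), (i : ℕ) = (j : ℕ) + 1 → M i j = -1)
    (Q : ℕ → R) (hQ0 : Q 0 = 1)
    (hQ : ∀ j : ℕ, j < n + 1 →
      Q (j + 1) = ∑ i : Fin (j + 1),
        Q i * M ⟨n - j, Nat.lt_succ_of_le (Nat.sub_le n j)⟩
                ⟨n - (i : ℕ), Nat.lt_succ_of_le (Nat.sub_le n i)⟩) :
    Q (n + 1) = detRight M := by
  rw [hQ n n.lt_succ_self, ← IsAlmostTriangular.sum_mul_zero_rev_eq_detRight ⟨hlow, hsub⟩ hQ0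
    fun j hj => hQ j (by omega)]
  refine sum_congr rfl fun i _ => ?_
  congr 2 <;> ext <;> simp
end

section
/- Let M be an almost triangular matrix of size n+1 over an associative ring R. Then both inductive algorithms (the P-algorithm: P_0 = 1, P_{j+1} = Σ_{i=0}^j M_{ij} P_i; and the Q-algorithm: Q_0 = 1, Q_{j+1} = Σ_{i=0}^j Q_i M_{n-j,n-i}) yield the same value, which equals Σ M_{(i_k, i_{k+1}-1)} M_{(i_{k-1}, i_k - 1)} ⋯ M_{(i_0, i_1 - 1)}, summed over all sequences of integers 0 = i_0 < i_1 < ... < i_k < i_{k+1} = n+1. -/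
/-- Extension of a matrix on `Fin (n+1)` to `ℕ × ℕ`, by zero. -/
def Mext {R : Type*} [Ring R] {n : ℕ} (M : Matrix (Fin (n+1)) (Fin (n+1)) R)
    (i j : ℕ) : R :=
  if h : i < n + 1 ∧ j < n + 1 then M ⟨i, h.1⟩ ⟨j, h.2⟩ else 0

/-- For a sorted chain `[i_0, i_1, …, i_{k+1}]` the ordered product
`M_{(i_k, i_{k+1}-1)} M_{(i_{k-1}, i_k - 1)} ⋯ M_{(i_0, i_1 - 1)}`. -/
def chainProd {R : Type*} [Ring R] {n : ℕ} (M : Matrix (Fin (n+1)) (Fin (n+1)) R)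
    (l : List ℕ) : R :=
  (l.zip l.tail).foldl (fun acc pr => Mext M pr.1 (pr.2 - 1) * acc) 1

/-- Sum over all sequences `0 = i_0 < i_1 < … < i_k < i_{k+1} = n+1` (encoded by their
set `S` of intermediate values, a subset of `{1,…,n}`) of the ordered products
`M_{(i_k, i_{k+1}-1)} ⋯ M_{(i_0, i_1-1)}`. -/
def chainSum {R : Type*} [Ring R] {n : ℕ} (M : Matrix (Fin (n+1)) (Fin (n+1)) R) : R :=
  ∑ S ∈ (Finset.Icc 1 n).powerset,
    chainProd M ((insert 0 (insert (n + 1) S)).sort (· ≤ ·))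

/-! Grouping the chains from `0` to `j + 1` by their last point before `j + 1` gives
`chainSumBetween M 0 (j + 1) = ∑ i ≤ j, M i j * chainSumBetween M 0 i`, the `P`-recursion, and
grouping the chains from `n - j` to `n + 1` by their second point gives the `Q`-recursion for
the chain sums ending at `n + 1`. So `P j` and `Q j` are chain sums, and for `j = n + 1` both are
the chain sum over all chains from `0` to `n + 1`. -/

open Finset

lemma Finset.sort_insert_eq_cons {α : Type*} [LinearOrder α] {s : Finset α} {a : α}
    (h : ∀ b ∈ s, a < b) : (insert a s).sort (· ≤ ·) = a :: s.sort (· ≤ ·) :=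
  sort_insert _ (fun b hb => (h b hb).le) (fun ha => lt_irrefl a (h a ha))

lemma Finset.sort_insert_eq_concat {α : Type*} [LinearOrder α] {s : Finset α} {a : α}
    (h : ∀ b ∈ s, b < a) : (insert a s).sort (· ≤ ·) = s.sort (· ≤ ·) ++ [a] := by
  have hnodup : (s.sort (· ≤ ·) ++ [a]).Nodup :=
    List.nodup_append.2 ⟨sort_nodup _ _, List.nodup_singleton a, fun b hb c hc =>
      (List.mem_singleton.1 hc) ▸ (h b ((mem_sort _).1 hb)).ne⟩
  have hset : insert a s = (s.sort (· ≤ ·) ++ [a]).toFinset := by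
    ext; simp
  rw [hset, List.toFinset_sort _ hnodup]
  exact List.pairwise_append.2 ⟨pairwise_sort _ _, List.pairwise_singleton _ a,
    fun b hb c hc => (List.mem_singleton.1 hc) ▸ (h b ((mem_sort _).1 hb)).le⟩

section

variable {R : Type*} [Ring R] {n : ℕ} (M : Matrix (Fin (n+1)) (Fin (n+1)) R)

lemma Mext_of_lt {i j : ℕ} (hi : i < n + 1) (hj : j < n + 1) :
    Mext M i j = M ⟨i, hi⟩ ⟨j, hj⟩ :=
  dif_pos ⟨hi, hj⟩

lemma chainProd_eq_prod_reverse (l : List ℕ) :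
    chainProd M l = ((l.zip l.tail).map fun p => Mext M p.1 (p.2 - 1)).reverse.prod := by
  rw [chainProd, List.prod_eq_foldr, List.foldr_reverse, List.foldl_map]

@[simp] lemma chainProd_singleton (a : ℕ) : chainProd M [a] = 1 := rfl

lemma chainProd_cons_cons (s a : ℕ) (l : List ℕ) :
    chainProd M (s :: a :: l) = chainProd M (a :: l) * Mext M s (a - 1) := by
  simp [chainProd_eq_prod_reverse]

lemma chainProd_append_pair (l : List ℕ) (a e : ℕ) :
    chainProd M (l ++ [a, e]) = Mext M a (e - 1) * chainProd M (l ++ [a]) := by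
  induction l with
  | nil => simp [chainProd_cons_cons]
  | cons x l ih =>
    cases l with
    | nil => simp [chainProd_cons_cons]
    | cons y l => simp only [List.cons_append, chainProd_cons_cons] at ih ⊢; rw [ih, mul_assoc]

lemma chainProd_sort_insert_insert_of_lt {s u : ℕ} {T : Finset ℕ} (hsu : s < u)
    (hT : ∀ x ∈ T, u < x) :
    chainProd M ((insert s (insert u T)).sort (· ≤ ·))
      = chainProd M ((insert u T).sort (· ≤ ·)) * Mext M s (u - 1) := by
  have hs : ∀ x ∈ insert u T, s < x := by
    simpa [hsu] using fun x hx => hsu.trans (hT x hx)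
  rw [sort_insert_eq_cons hs, sort_insert_eq_cons hT, chainProd_cons_cons]

lemma chainProd_sort_insert_insert_of_gt {m e : ℕ} {T : Finset ℕ} (hme : m < e)
    (hT : ∀ x ∈ T, x < m) :
    chainProd M ((insert e (insert m T)).sort (· ≤ ·))
      = Mext M m (e - 1) * chainProd M ((insert m T).sort (· ≤ ·)) := by
  have he : ∀ x ∈ insert m T, x < e := by
    simpa [hme] using fun x hx => (hT x hx).trans hme
  rw [sort_insert_eq_concat he, sort_insert_eq_concat hT, List.append_assoc,
    List.singleton_append, chainProd_append_pair]

def chainSumBetween (a b : ℕ) : R :=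
  ∑ S ∈ (Ioo a b).powerset, chainProd M ((insert a (insert b S)).sort (· ≤ ·))

lemma chainSumBetween_self (a : ℕ) : chainSumBetween M a a = 1 := by
  simp [chainSumBetween]

lemma chainSum_eq_chainSumBetween : chainSum M = chainSumBetween M 0 (n + 1) := by
  rw [chainSum, chainSumBetween, Ioo_add_one_right_eq_Ioc, ← Icc_add_one_left_eq_Ioc, zero_add]

/- The fixed endpoint (`e` here, `s` in `sum_powerset_Ico_chainProd`) is decoupled from the
range of the intermediate points so that the sum can be built up one point at a time. -/
lemma sum_powerset_Ioc_chainProd {a m e : ℕ} (ham : a ≤ m) (hme : m < e) :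
    ∑ S ∈ (Ioc a m).powerset, chainProd M ((insert a (insert e S)).sort (· ≤ ·))
      = ∑ i ∈ Icc a m, Mext M i (e - 1) * chainSumBetween M a i := by
  induction m, ham using Nat.le_induction with
  | base => simp [chainSumBetween_self, sort_insert_eq_cons, hme, chainProd_cons_cons]
  | succ m ham ih =>
    rw [← insert_Ioc_right_eq_Ioc_add_one ham, sum_powerset_insert (by simp),
      ih (by omega), ← insert_Icc_right_eq_Icc_add_one (by omega),
      sum_insert (by simp), add_comm (Mext M _ _ * _), chainSumBetween,
      Ioo_add_one_right_eq_Ioc, mul_sum]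
    congr 1
    refine sum_congr rfl fun S hS => ?_
    have hS : ∀ x ∈ insert a S, x < m + 1 := by
      intro x hx
      rcases mem_insert.1 hx with rfl | hx
      · omega
      · have := (mem_Ioc.1 (mem_powerset.1 hS hx)).2; omega
    rw [insert_comm e (m + 1) S, insert_comm a (m + 1) (insert e S), insert_comm a e S,
      insert_comm (m + 1) e, insert_comm a (m + 1) S,
      chainProd_sort_insert_insert_of_gt M hme hS]

lemma sum_powerset_Ico_chainProd {s u b : ℕ} (hsu : s < u) (hub : u ≤ b) :
    ∑ S ∈ (Ico u b).powerset, chainProd M ((insert s (insert b S)).sort (· ≤ ·))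
      = ∑ t ∈ Icc u b, chainSumBetween M t b * Mext M s (t - 1) := by
  revert hsu
  induction hub using Nat.decreasingInduction with
  | self => intro hsb; simp [chainSumBetween_self, sort_insert_eq_cons, hsb, chainProd_cons_cons]
  | of_succ u hub ih =>
    intro hsu
    rw [← insert_Ico_add_one_left_eq_Ico hub, sum_powerset_insert (by simp), ih (by omega),
      ← insert_Icc_add_one_left_eq_Icc hub.le, sum_insert (by simp), add_comm (_ * Mext M s _),
      chainSumBetween, ← Ico_add_one_left_eq_Ioo, sum_mul]
    congr 1
    refine sum_congr rfl fun S hS => ?_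
    have hS : ∀ x ∈ insert b S, u < x := by
      intro x hx
      rcases mem_insert.1 hx with rfl | hx
      · exact hub
      · have := (mem_Ico.1 (mem_powerset.1 hS hx)).1; omega
    rw [insert_comm b u S, chainProd_sort_insert_insert_of_lt M hsu hS]

lemma chainSumBetween_eq_sum_last_step {a b : ℕ} (hab : a ≤ b) :
    chainSumBetween M a (b + 1) = ∑ i ∈ Icc a b, Mext M i b * chainSumBetween M a i := by
  rw [chainSumBetween, Ioo_add_one_right_eq_Ioc, sum_powerset_Ioc_chainProd M hab (lt_add_one b),
    add_tsub_cancel_right]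

lemma chainSumBetween_eq_sum_first_step {a b : ℕ} (hab : a < b) :
    chainSumBetween M a b = ∑ t ∈ Icc (a + 1) b, chainSumBetween M t b * Mext M a (t - 1) := by
  rw [chainSumBetween, ← Ico_add_one_left_eq_Ioo,
    sum_powerset_Ico_chainProd M (lt_add_one a) hab]

lemma pAlgorithm_eq_chainSumBetween (P : ℕ → R) (hP0 : P 0 = 1)
    (hP : ∀ j : ℕ, (hj : j < n + 1) →
      P (j + 1) = ∑ i : Fin (j + 1),
        M ⟨i, lt_of_lt_of_le i.isLt (Nat.succ_le_of_lt hj)⟩ ⟨j, hj⟩ * P i)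
    {j : ℕ} (hj : j ≤ n + 1) : P j = chainSumBetween M 0 j := by
  induction j using Nat.strong_induction_on with
  | _ j ih =>
    rcases j with _ | j
    · rw [hP0, chainSumBetween_self]
    · rw [hP j hj, chainSumBetween_eq_sum_last_step M j.zero_le, ← Ico_add_one_right_eq_Icc,
        ← range_eq_Ico, ← Fin.sum_univ_eq_sum_range (fun i => Mext M i j * chainSumBetween M 0 i)]
      refine sum_congr rfl fun i _ => ?_
      rw [Mext_of_lt M (by omega) hj, ih i (by omega) (by omega)]

lemma qAlgorithm_eq_chainSumBetween (Q : ℕ → R) (hQ0 : Q 0 = 1)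
    (hQ : ∀ j : ℕ, j < n + 1 →
      Q (j + 1) = ∑ i : Fin (j + 1),
        Q i * M ⟨n - j, Nat.lt_succ_of_le (Nat.sub_le n j)⟩
                ⟨n - (i : ℕ), Nat.lt_succ_of_le (Nat.sub_le n i)⟩)
    {m : ℕ} (hm : m ≤ n + 1) : Q m = chainSumBetween M (n + 1 - m) (n + 1) := by
  induction m using Nat.strong_induction_on with
  | _ m ih =>
    rcases m with _ | j
    · rw [hQ0, Nat.sub_zero, chainSumBetween_self]
    · let f t := chainSumBetween M t (n + 1) * Mext M (n - j) (t - 1)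
      calc Q (j + 1) = ∑ i ∈ range (j + 1), f (n + 1 - i) := by
            rw [hQ j hm, ← Fin.sum_univ_eq_sum_range]
            refine sum_congr rfl fun i _ => ?_
            dsimp only [f]
            rw [ih i (by omega) (by omega), show n + 1 - i - 1 = n - i by omega,
              Mext_of_lt M (by omega) (by omega)]
        _ = ∑ t ∈ Icc (n - j + 1) (n + 1), f t := by
            rw [range_eq_Ico, sum_Ico_reflect f 0 (by omega), ← Ico_add_one_right_eq_Icc]
            congr 2; omega
        _ = chainSumBetween M (n + 1 - (j + 1)) (n + 1) := by
            rw [Nat.add_sub_add_right, chainSumBetween_eq_sum_first_step M (by omega)]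

end

theorem stmt4_general {R : Type*} [Ring R] {n : ℕ} (M : Matrix (Fin (n+1)) (Fin (n+1)) R)
    (P Q : ℕ → R) (hP0 : P 0 = 1)
    (hP : ∀ j : ℕ, (hj : j < n + 1) →
      P (j + 1) = ∑ i : Fin (j + 1),
        M ⟨i, lt_of_lt_of_le i.isLt (Nat.succ_le_of_lt hj)⟩ ⟨j, hj⟩ * P i)
    (hQ0 : Q 0 = 1)
    (hQ : ∀ j : ℕ, j < n + 1 →
      Q (j + 1) = ∑ i : Fin (j + 1),
        Q i * M ⟨n - j, Nat.lt_succ_of_le (Nat.sub_le n j)⟩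
                ⟨n - (i : ℕ), Nat.lt_succ_of_le (Nat.sub_le n i)⟩) :
    P (n + 1) = Q (n + 1) ∧ P (n + 1) = chainSum M := by
  have hPsum : P (n + 1) = chainSum M := by
    rw [pAlgorithm_eq_chainSumBetween M P hP0 hP le_rfl, chainSum_eq_chainSumBetween]
  have hQsum : Q (n + 1) = chainSum M := by
    rw [qAlgorithm_eq_chainSumBetween M Q hQ0 hQ le_rfl, Nat.sub_self, chainSum_eq_chainSumBetween]
  exact ⟨hPsum.trans hQsum.symm, hPsum⟩

/-- For an almost triangular matrix `M`, both the `P`-algorithm and the `Q`-algorithm give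
the same value, namely the sum over all sequences `0 = i_0 < … < i_{k+1} = n+1` of
`M_{(i_k, i_{k+1}-1)} M_{(i_{k-1}, i_k - 1)} ⋯ M_{(i_0, i_1 - 1)}`. -/
theorem stmt4 {R : Type*} [Ring R] {n : ℕ} (M : Matrix (Fin (n+1)) (Fin (n+1)) R)
    (hlow : ∀ i j : Fin (n+1), (j : ℕ) + 1 < (i : ℕ) → M i j = 0)
    (hsub : ∀ i j : Fin (n+1), (i : ℕ) = (j : ℕ) + 1 → M i j = -1)
    (P Q : ℕ → R) (hP0 : P 0 = 1)
    (hP : ∀ j : ℕ, (hj : j < n + 1) →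
      P (j + 1) = ∑ i : Fin (j + 1),
        M ⟨i, lt_of_lt_of_le i.isLt (Nat.succ_le_of_lt hj)⟩ ⟨j, hj⟩ * P i)
    (hQ0 : Q 0 = 1)
    (hQ : ∀ j : ℕ, j < n + 1 →
      Q (j + 1) = ∑ i : Fin (j + 1),
        Q i * M ⟨n - j, Nat.lt_succ_of_le (Nat.sub_le n j)⟩
                ⟨n - (i : ℕ), Nat.lt_succ_of_le (Nat.sub_le n i)⟩) :
    P (n + 1) = Q (n + 1) ∧ P (n + 1) = chainSum M :=
  stmt4_general M P Q hP0 hP hQ0 hQ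
end

section
/- Let R be an associative ring, E a right R-module, ξ_0, ..., ξ_n elements of E, and M an almost triangular matrix of size n+1 over R. Let M^τ denote the matrix with (i,j)-entry M_{n-j,n-i}. If the row vector (ξ_0, ..., ξ_n) multiplied by M^τ equals the zero row vector, then ξ_0 · det_right(M) = 0. -/
open Equiv Equiv.Perm MulOpposite

namespace Equiv.Perm

theorem decomposeFin_symm_eq_swap_mul {n : ℕ} (p : Fin (n + 1)) (e : Perm (Fin n)) :
    decomposeFin.symm (p, e) = swap 0 p * decomposeFin.symm (0, e) := by
  ext k
  induction k using Fin.cases with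
  | zero => simp [decomposeFin_symm_apply_zero]
  | succ k => simp [decomposeFin_symm_apply_succ]

theorem decomposeFin_symm_zero_inv {n : ℕ} (e : Perm (Fin n)) :
    decomposeFin.symm (0, e⁻¹) = (decomposeFin.symm (0, e))⁻¹ := by
  refine eq_inv_of_mul_eq_one_left (ext fun k => ?_)
  induction k using Fin.cases with
  | zero => simp [decomposeFin_symm_apply_zero]
  | succ k => simp [decomposeFin_symm_apply_succ]

/-- The summand for `σ` is indexed by `p = σ⁻¹ 0`. -/
theorem sum_perm_fin_succ {β : Type*} [AddCommMonoid β] {n : ℕ} (f : Perm (Fin (n + 1)) → β) :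
    ∑ σ, f σ = ∑ p, ∑ e : Perm (Fin n), f (decomposeFin.symm (0, e) * Equiv.swap 0 p) := by
  rw [← Equiv.sum_comp (Equiv.inv _), ← Equiv.sum_comp decomposeFin.symm, Fintype.sum_prod_type]
  refine Fintype.sum_congr _ _ fun p => ?_
  rw [← Equiv.sum_comp (Equiv.inv _)]
  simp [decomposeFin_symm_eq_swap_mul p, decomposeFin_symm_zero_inv]

end Equiv.Perm

namespace Matrix

variable {R : Type*} [Ring R]

/-- The column determinant: the factors `N (σ k) k` are multiplied in increasing column order. -/
def cdet {n : ℕ} (N : Matrix (Fin n) (Fin n) R) : R :=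
  ∑ σ : Perm (Fin n), (sign σ : ℤ) • (List.ofFn fun k => N (σ k) k).prod

theorem detRight_eq_cdet_submatrix_rev {n : ℕ} (M : Matrix (Fin (n + 1)) (Fin (n + 1)) R) :
    detRight M = (M.submatrix Fin.rev Fin.rev).cdet := by
  refine Fintype.sum_equiv (permCongr Fin.revPerm) _ _ fun σ => ?_
  simp only [sign_permCongr, submatrix_apply, permCongr_apply, Fin.revPerm_symm,
    Fin.revPerm_apply, Fin.rev_rev]

theorem cdet_fin_one (N : Matrix (Fin 1) (Fin 1) R) : N.cdet = N 0 0 := by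
  simp [cdet, List.ofFn_succ]

structure IsAlmostUpperTriangular {n : ℕ} (N : Matrix (Fin n) (Fin n) R) : Prop where
  apply_eq_zero : ∀ i j : Fin n, (i : ℕ) + 1 < j → N i j = 0
  apply_eq_neg_one : ∀ i j : Fin n, (j : ℕ) = i + 1 → N i j = -1

/-- The matrix of the system `∑ i, ξ i * N j i = 0` (rows `j ≥ 1`) in the unknowns
`ξ 0, ξ 2, ξ 3, …`, after substituting `ξ 1 = ξ 0 * N 0 0`. -/
def eliminateFirst {n : ℕ} (N : Matrix (Fin (n + 2)) (Fin (n + 2)) R) :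
    Matrix (Fin (n + 1)) (Fin (n + 1)) R :=
  of fun j => Fin.cons (N j.succ 0 + N 0 0 * N j.succ 1) fun i => N j.succ i.succ.succ

@[simp]
theorem eliminateFirst_apply_zero {n : ℕ} (N : Matrix (Fin (n + 2)) (Fin (n + 2)) R)
    (j : Fin (n + 1)) : N.eliminateFirst j 0 = N j.succ 0 + N 0 0 * N j.succ 1 :=
  rfl

@[simp]
theorem eliminateFirst_apply_succ {n : ℕ} (N : Matrix (Fin (n + 2)) (Fin (n + 2)) R)
    (j : Fin (n + 1)) (i : Fin n) : N.eliminateFirst j i.succ = N j.succ i.succ.succ :=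
  rfl

namespace IsAlmostUpperTriangular

section Elimination

variable {n : ℕ} {N : Matrix (Fin (n + 2)) (Fin (n + 2)) R}

theorem eliminateFirst (hN : N.IsAlmostUpperTriangular) :
    N.eliminateFirst.IsAlmostUpperTriangular where
  apply_eq_zero i j hij := by
    cases j using Fin.cases with
    | zero => simp at hij
    | succ j => exact hN.apply_eq_zero _ _ (by simp only [Fin.val_succ] at hij ⊢; omega)
  apply_eq_neg_one i j hij := by
    cases j using Fin.cases with
    | zero => simp at hij
    | succ j => exact hN.apply_eq_neg_one _ _ (by simp only [Fin.val_succ] at hij ⊢; omega)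

/-- Row `0` of `N` vanishes beyond column `1`, so only permutations with `σ⁻¹ 0 ∈ {0, 1}`
contribute; for each `e`, the two contributions combine into the first column of
`eliminateFirst N`. -/
theorem cdet_eq_cdet_eliminateFirst (hN : N.IsAlmostUpperTriangular) :
    N.cdet = N.eliminateFirst.cdet := by
  set rest : Perm (Fin (n + 1)) → R := fun e =>
    (List.ofFn fun k : Fin n => N (e k.succ).succ k.succ.succ).prod
  have hcol_zero (e : Perm (Fin (n + 1))) :
      (sign (decomposeFin.symm (0, e) * Equiv.swap 0 0) : ℤ) •
        (List.ofFn fun k =>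
          N ((decomposeFin.symm (0, e) * Equiv.swap 0 0 : Perm (Fin (n + 2))) k) k).prod =
      (sign e : ℤ) • (N 0 0 * N (e 0).succ 1 * rest e) := by
    simp [List.ofFn_succ, decomposeFin_symm_apply_zero, decomposeFin_symm_apply_succ,
      decomposeFin.symm_sign, rest, mul_assoc]
  have hcol_one (e : Perm (Fin (n + 1))) :
      (sign (decomposeFin.symm (0, e) * Equiv.swap 0 1) : ℤ) •
        (List.ofFn fun k =>
          N ((decomposeFin.symm (0, e) * Equiv.swap 0 1 : Perm (Fin (n + 2))) k) k).prod =
      (sign e : ℤ) • (N (e 0).succ 0 * rest e) := by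
    have hswap (k : Fin n) : Equiv.swap (0 : Fin (n + 2)) 1 k.succ.succ = k.succ.succ :=
      Equiv.swap_apply_of_ne_of_ne (Fin.succ_ne_zero _) (by simp [Fin.ext_iff])
    simp [List.ofFn_succ, decomposeFin_symm_apply_zero, decomposeFin_symm_apply_succ,
      decomposeFin.symm_sign, rest, hN.apply_eq_neg_one 0 1, hswap]
  have hcol_ge_two (e : Perm (Fin (n + 1))) (q : Fin n) :
      (List.ofFn fun k =>
        N ((decomposeFin.symm (0, e) * Equiv.swap 0 q.succ.succ : Perm (Fin (n + 2))) k) k).prod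
        = 0 := by
    refine List.prod_eq_zero (List.mem_ofFn.2 ⟨q.succ.succ, ?_⟩)
    simpa [decomposeFin_symm_apply_zero] using hN.apply_eq_zero 0 q.succ.succ (by simp)
  rw [cdet, sum_perm_fin_succ, Fin.sum_univ_succ, Fin.sum_univ_succ]
  simp only [Fin.succ_zero_eq_one, hcol_zero, hcol_one, hcol_ge_two, smul_zero,
    Finset.sum_const_zero, add_zero]
  rw [← Finset.sum_add_distrib, cdet]
  refine Fintype.sum_congr _ _ fun e => ?_
  simp only [List.ofFn_succ, List.prod_cons, eliminateFirst_apply_zero, eliminateFirst_apply_succ,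
    rest]
  rw [← smul_add, add_mul, add_comm (N 0 0 * _ * _)]

end Elimination

theorem op_cdet_smul_eq_zero {E : Type*} [AddCommGroup E] [Module Rᵐᵒᵖ E] :
    ∀ {n : ℕ} {N : Matrix (Fin (n + 1)) (Fin (n + 1)) R}, N.IsAlmostUpperTriangular →
      ∀ ξ : Fin (n + 1) → E, (∀ j, ∑ i, op (N j i) • ξ i = 0) → op N.cdet • ξ 0 = 0
  | 0, N, _, ξ, h => by simpa [cdet_fin_one] using h 0
  | n + 1, N, hN, ξ, h => by
    have hξ₁ : ξ 1 = op (N 0 0) • ξ 0 := by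
      have h₀ := h 0
      rw [Fin.sum_univ_succ, Fin.sum_univ_succ] at h₀
      simp only [Fin.succ_zero_eq_one, hN.apply_eq_neg_one 0 1 (by simp),
        fun k : Fin n => hN.apply_eq_zero 0 k.succ.succ (by simp)] at h₀
      exact (sub_eq_zero.1 (by simpa [← sub_eq_add_neg] using h₀)).symm
    have h_elim (j : Fin (n + 1)) :
        ∑ i, op (N.eliminateFirst j i) •
          (Fin.cons (ξ 0) fun i => ξ i.succ.succ : Fin (n + 1) → E) i = 0 := by
      rw [← h j.succ, Fin.sum_univ_succ, Fin.sum_univ_succ, Fin.sum_univ_succ]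
      simp [op_add, add_smul, op_mul, mul_smul, ← hξ₁, add_assoc]
    rw [hN.cdet_eq_cdet_eliminateFirst]
    exact op_cdet_smul_eq_zero hN.eliminateFirst _ h_elim

end IsAlmostUpperTriangular

end Matrix

/-- Let `E` be a right `R`-module (a module over `Rᵐᵒᵖ`), `ξ_0, …, ξ_n ∈ E`, and `M` an
almost triangular matrix over `R`. If `(ξ_0,…,ξ_n) M^τ = 0`, where
`(M^τ)_{ij} = M_{n-j,n-i}`, then `ξ_0 · det_right(M) = 0`. -/
theorem stmt5 {R : Type*} [Ring R] {n : ℕ} {E : Type*} [AddCommGroup E] [Module Rᵐᵒᵖ E]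
    (M : Matrix (Fin (n+1)) (Fin (n+1)) R)
    (hlow : ∀ i j : Fin (n+1), (j : ℕ) + 1 < (i : ℕ) → M i j = 0)
    (hsub : ∀ i j : Fin (n+1), (i : ℕ) = (j : ℕ) + 1 → M i j = -1)
    (ξ : Fin (n+1) → E)
    (h : ∀ j : Fin (n+1), ∑ i, MulOpposite.op (M (Fin.rev j) (Fin.rev i)) • ξ i = 0) :
    MulOpposite.op (detRight M) • ξ 0 = 0 := by
  have hN : (M.submatrix Fin.rev Fin.rev).IsAlmostUpperTriangular :=
    ⟨fun i j hij => hlow _ _ (by simp only [Fin.val_rev]; omega),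
      fun i j hij => hsub _ _ (by simp only [Fin.val_rev]; omega)⟩
  rw [Matrix.detRight_eq_cdet_submatrix_rev]
  exact hN.op_cdet_smul_eq_zero ξ h
end

section
/- Let R be an associative ring with an anti-involution ∨ (additive, with (xy)^∨ = y^∨ x^∨), and let M be an almost triangular matrix over R. Then (det_right(M))^∨ = det_right(M^{τ∨}), where M^{τ∨} is obtained from M by transposing along the anti-diagonal and applying ∨ entrywise. -/
/-!
Applying `∨` to the term of `det_right M` indexed by `σ` reverses the product, giving the entries
`(M_{σ j, j})^∨` in column order `j = 0, …, n`; the term of `det_right (M^{τ∨})` indexed by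
`rev ∘ σ⁻¹ ∘ rev` (same sign) lists the same entries in row order. For an almost triangular matrix
a term vanishes unless `σ j ≤ j + 1` for all `j`, and then the two orders differ by moving the
central subdiagonal entries `-1`: if `k` is the largest index with `σ k = k + 1`, swapping the
positions `k, k + 1` is such a move and produces a permutation with fewer non-fixed points
that still satisfies `σ j ≤ j + 1`.
-/

open Equiv Equiv.Perm MulOpposite

theorem List.reverse_ofFn {α : Type*} {n : ℕ} (f : Fin n → α) :
    (List.ofFn f).reverse = List.ofFn fun i => f i.rev := by
  simp only [List.ofFn_eq_map, ← List.map_reverse, List.finRange_reverse, List.map_map]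
  rfl

theorem List.prod_ofFn_comp_swap {M : Type*} [Monoid M] :
    ∀ {n : ℕ} (b : Fin (n + 1) → M) (k : Fin n), Commute (b k.castSucc) (b k.succ) →
      (List.ofFn (b ∘ Equiv.swap k.castSucc k.succ)).prod = (List.ofFn b).prod
  | 0, _, k, _ => k.elim0
  | n + 1, b, k, h => by
    induction k using Fin.cases with
    | zero =>
      have hs : ∀ i : Fin n, Equiv.swap (0 : Fin (n + 2)) 1 i.succ.succ = i.succ.succ := fun i =>
        swap_apply_of_ne_of_ne (Fin.succ_ne_zero _) (Fin.succ_succ_ne_one i)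
      simp only [List.ofFn_succ, Function.comp_apply, List.prod_cons]
      simp only [Fin.succ_zero_eq_one, Fin.castSucc_zero, swap_apply_left, swap_apply_right,
        hs] at h ⊢
      rw [← mul_assoc, ← mul_assoc, h.eq]
    | succ k =>
      have hs : ∀ i : Fin (n + 1), Equiv.swap k.succ.castSucc k.succ.succ i.succ
          = (Equiv.swap k.castSucc k.succ i).succ := fun i => by
        rw [← Fin.succ_castSucc, Fin.succ_injective _ |>.swap_apply]
      have hs0 : Equiv.swap k.succ.castSucc k.succ.succ 0 = 0 :=
        swap_apply_of_ne_of_ne (Fin.castSucc_ne_zero_iff.2 (Fin.succ_ne_zero _)).symm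
          (Fin.succ_ne_zero _).symm
      rw [List.ofFn_succ, List.ofFn_succ (f := b)]
      simp only [Function.comp_apply, List.prod_cons, hs, hs0]
      rw [← List.prod_ofFn_comp_swap (fun i => b i.succ) k (by rwa [Fin.succ_castSucc])]
      rfl

theorem Equiv.Perm.eq_one_of_forall_val_apply_le {m : ℕ} (σ : Perm (Fin m))
    (h : ∀ i, (σ i : ℕ) ≤ i) : σ = 1 := by
  have hsum : ∑ i, (σ i : ℕ) = ∑ i : Fin m, (i : ℕ) := Equiv.sum_comp σ (fun i => (i : ℕ))
  ext i
  exact (Finset.sum_eq_sum_iff_of_le fun i _ => h i).1 hsum i (Finset.mem_univ i)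

theorem Equiv.Perm.exists_apply_castSucc_eq_succ {n : ℕ} (σ : Perm (Fin (n + 1)))
    (hσ : ∀ i, (σ i : ℕ) ≤ i + 1) (h1 : σ ≠ 1) :
    ∃ k : Fin n, σ k.castSucc = k.succ ∧ (σ k.succ : ℕ) ≤ k := by
  set S := Finset.univ.filter fun k : Fin n => σ k.castSucc = k.succ
  have hS : S.Nonempty := by
    by_contra hS
    refine h1 (σ.eq_one_of_forall_val_apply_le fun i => ?_)
    by_contra! hi
    have hin : (i : ℕ) < n := by have := (σ i).isLt; have := hσ i; omega
    refine hS ⟨⟨i, hin⟩, Finset.mem_filter.2 ⟨Finset.mem_univ _, Fin.ext ?_⟩⟩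
    show (σ i : ℕ) = i + 1
    have := hσ i
    omega
  set k := S.max' hS
  have hk : σ k.castSucc = k.succ := (Finset.mem_filter.1 (S.max'_mem hS)).2
  refine ⟨k, hk, ?_⟩
  by_contra! hlt
  have hne : σ k.succ ≠ k.succ := fun h =>
    Fin.castSucc_lt_succ.ne (σ.injective (hk.trans h.symm))
  have hval : (σ k.succ : ℕ) = k + 2 := by
    have := hσ k.succ
    have := Fin.val_ne_of_ne hne
    simp only [Fin.val_succ] at *
    omega
  have hkn : (k : ℕ) + 1 < n := by have := (σ k.succ).isLt; omega
  have hmem : (⟨k + 1, hkn⟩ : Fin n) ∈ S :=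
    Finset.mem_filter.2 ⟨Finset.mem_univ _, Fin.ext (show (σ k.succ : ℕ) = k + 1 + 1 by omega)⟩
  have := S.le_max' _ hmem
  simp [Fin.le_def, k] at this

theorem Equiv.Perm.prod_ofFn_comp_inv {M : Type*} [Monoid M] {n : ℕ} (σ : Perm (Fin (n + 1)))
    (b : Fin (n + 1) → M) (hσ : ∀ i, (σ i : ℕ) ≤ i + 1)
    (hb : ∀ i, (σ i : ℕ) = i + 1 → ∀ x, Commute (b i) x) :
    (List.ofFn (b ∘ ⇑σ⁻¹)).prod = (List.ofFn b).prod := by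
  by_cases h1 : σ = 1
  · subst h1; rfl
  obtain ⟨k, hk, hk'⟩ := σ.exists_apply_castSucc_eq_succ hσ h1
  set s := swap k.castSucc k.succ
  have hk'' : σ k.succ ≠ k.succ := fun h => by rw [h, Fin.val_succ] at hk'; omega
  have hdec : (σ * s).support.card < σ.support.card := by
    rw [mul_swap_eq_swap_mul, hk]
    exact card_support_swap_mul hk''
  calc (List.ofFn (b ∘ ⇑σ⁻¹)).prod = (List.ofFn ((b ∘ s) ∘ ⇑(σ * s)⁻¹)).prod := by
        congr 2; funext i
        simp only [Function.comp_apply, mul_inv_rev, Perm.mul_apply, s, swap_inv, swap_apply_self]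
    _ = (List.ofFn (b ∘ s)).prod := prod_ofFn_comp_inv (σ * s) (b ∘ s) ?_ ?_
    _ = _ := List.prod_ofFn_comp_swap b k (hb _ (by simp [hk]) _)
  · intro i
    rcases eq_or_ne i k.castSucc with rfl | hi₁
    · simp only [coe_mul, Function.comp_apply, swap_apply_left, Fin.val_castSucc, s]
      omega
    rcases eq_or_ne i k.succ with rfl | hi₂
    · simp [s, hk]
    · simpa [s, swap_apply_of_ne_of_ne hi₁ hi₂] using hσ i
  · intro i hi
    rcases eq_or_ne i k.castSucc with rfl | hi₁
    · simp only [coe_mul, Function.comp_apply, swap_apply_left, Fin.val_castSucc, s] at hi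
      omega
    rcases eq_or_ne i k.succ with rfl | hi₂
    · simp [s, hk] at hi
    · simp only [Perm.mul_apply, Function.comp_apply, s, swap_apply_of_ne_of_ne hi₁ hi₂] at hi ⊢
      exact hb i hi
termination_by σ.support.card

theorem Matrix.prod_ofFn_apply_perm_eq_prod_ofFn_apply_perm_inv {R : Type*} [MonoidWithZero R]
    {n : ℕ} (c : Matrix (Fin (n + 1)) (Fin (n + 1)) R)
    (hlow : ∀ i j : Fin (n + 1), (j : ℕ) + 1 < i → c i j = 0)
    (hsub : ∀ i j : Fin (n + 1), (i : ℕ) = j + 1 → ∀ x, Commute (c i j) x)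
    (σ : Perm (Fin (n + 1))) :
    (List.ofFn fun j => c (σ j) j).prod = (List.ofFn fun i => c i (σ⁻¹ i)).prod := by
  by_cases hσ : ∀ j, (σ j : ℕ) ≤ j + 1
  · have := σ.prod_ofFn_comp_inv (fun j => c (σ j) j) hσ fun j hj => hsub _ _ hj
    simpa only [Function.comp_def, coe_inv, apply_symm_apply] using this.symm
  · push Not at hσ
    obtain ⟨j, hj⟩ := hσ
    have hcol : (0 : R) ∈ List.ofFn fun j => c (σ j) j := List.mem_ofFn.2 ⟨j, hlow _ _ hj⟩
    have hrow : (0 : R) ∈ List.ofFn fun i => c i (σ⁻¹ i) :=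
      List.mem_ofFn.2 ⟨σ j, by rw [coe_inv, symm_apply_apply, hlow _ _ hj]⟩
    rw [List.prod_eq_zero hcol, List.prod_eq_zero hrow]

theorem unop_map_detRight {R : Type*} [Ring R] {n : ℕ} (φ : R →+* Rᵐᵒᵖ)
    (M : Matrix (Fin (n + 1)) (Fin (n + 1)) R) :
    unop (φ (detRight M)) =
      ∑ σ : Perm (Fin (n + 1)), (sign σ : ℤ) • (List.ofFn fun j => unop (φ (M (σ j) j))).prod := by
  simp only [detRight, map_sum, map_zsmul, Finset.unop_sum, unop_smul, unop_map_list_prod,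
    List.map_ofFn, List.reverse_ofFn, Function.comp_apply, Fin.rev_rev]

theorem detRight_of_rev_rev {R : Type*} [Ring R] {n : ℕ}
    (c : Matrix (Fin (n + 1)) (Fin (n + 1)) R) :
    detRight (Matrix.of fun i j => c j.rev i.rev) =
      ∑ σ : Perm (Fin (n + 1)), (sign σ : ℤ) • (List.ofFn fun i => c i (σ⁻¹ i)).prod := by
  rw [detRight]
  refine Fintype.sum_equiv ((Equiv.inv _).trans (MulAut.conj Fin.revPerm).toEquiv) _ _ fun τ => ?_
  have hsign : sign (MulAut.conj Fin.revPerm τ⁻¹) = sign τ := by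
    rw [MulAut.conj_apply, ← sign_inv τ]
    exact sign_symm_trans_trans τ⁻¹ Fin.revPerm
  simp only [Equiv.trans_apply, Equiv.inv_apply, MulEquiv.toEquiv_eq_coe,
    EquivLike.coe_coe, hsign]
  congr 3 with i
  simp only [Matrix.of_apply, Fin.rev_rev, MulAut.conj_apply, mul_inv_rev, inv_inv, coe_mul,
    coe_inv, Fin.revPerm_symm, Function.comp_apply, Fin.revPerm_apply]

/-- For an anti-involution `V` of `R` (additive, unital, anti-multiplicative) and an
almost triangular matrix `M`, one has `(det_right M)^∨ = det_right (M^{τ∨})`, where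
`(M^{τ∨})_{ij} = (M_{n-j,n-i})^∨`. -/
theorem stmt6 {R : Type*} [Ring R] {n : ℕ} (V : R → R)
    (hadd : ∀ x y, V (x + y) = V x + V y)
    (hmul : ∀ x y, V (x * y) = V y * V x)
    (hone : V 1 = 1)
    (M : Matrix (Fin (n+1)) (Fin (n+1)) R)
    (hlow : ∀ i j : Fin (n+1), (j : ℕ) + 1 < (i : ℕ) → M i j = 0)
    (hsub : ∀ i j : Fin (n+1), (i : ℕ) = (j : ℕ) + 1 → M i j = -1) :
    V (detRight M) = detRight (Matrix.of fun i j => V (M (Fin.rev j) (Fin.rev i))) := by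
  let φ : R →+* Rᵐᵒᵖ :=
    { toFun := fun x => op (V x)
      map_one' := congrArg op hone
      map_mul' := fun x y => congrArg op (hmul x y)
      map_zero' := congrArg op (by simpa using hadd 0 0)
      map_add' := fun x y => congrArg op (hadd x y) }
  have hV : ∀ x, V x = unop (φ x) := fun _ => rfl
  calc V (detRight M)
      = ∑ σ : Perm (Fin (n + 1)), (sign σ : ℤ) • (List.ofFn fun j => V (M (σ j) j)).prod :=
        unop_map_detRight φ M
    _ = ∑ σ : Perm (Fin (n + 1)), (sign σ : ℤ) • (List.ofFn fun i => V (M i (σ⁻¹ i))).prod := by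
        refine Finset.sum_congr rfl fun σ _ => congrArg _ ?_
        refine Matrix.prod_ofFn_apply_perm_eq_prod_ofFn_apply_perm_inv
          (fun i j => V (M i j)) (fun i j h => by simp [hlow i j h, hV]) (fun i j h x => ?_) σ
        simp [hsub i j h, hV]
    _ = _ := (detRight_of_rev_rev fun i j => V (M i j)).symm
end

section
/- For each p with 1 ≤ p ≤ n+1, the square matrix K^{(p)} of size n+2-p over ℚ defined by τ^{≥p}(x^{(p)}_k) = Σ_{i=0}^{n-p+1} K^{(p)}_{ki} a_{i, p+i-1} is invertible, where τ^{≥p} is the ring endomorphism of B sending a_{ij} to itself if j-i+1 ≥ p and to 0 otherwise. Equivalently, writing -u^p (uu* - p)^{n+1-p-i}(uu*)^i = Σ_k K^{(p)}_{ki} u^p (uu*)^k, the matrix (K^{(p)}_{ki}) is invertible. -/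
open Polynomial

theorem Matrix.isUnit_of_coeff_mul_X_pow {R : Type*} [CommRing R] {m : ℕ}
    (K : Matrix (Fin m) (Fin m) R) (q : Fin m → R[X])
    (hK : ∀ k i, K k i = (q i * X ^ (i : ℕ)).coeff k)
    (hq : ∀ i, IsUnit ((q i).coeff 0)) :
    IsUnit K := by
  have hlower : K.IsLowerTriangular := by
    intro k i hik
    rw [hK, coeff_mul_X_pow', if_neg (by exact_mod_cast not_le_of_gt hik)]
  have hdiag : ∀ i, K i i = (q i).coeff 0 := by
    intro i
    rw [hK, coeff_mul_X_pow', if_pos le_rfl, Nat.sub_self]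
  rw [Matrix.isUnit_iff_isUnit_det, Matrix.det_of_isLowerTriangular K hlower]
  exact IsUnit.prod_univ_iff.mpr fun i => hdiag i ▸ hq i

theorem stmt12_general (n p : ℕ) (hp1 : 1 ≤ p)
    (K : Matrix (Fin (n + 2 - p)) (Fin (n + 2 - p)) ℚ)
    (hK : ∀ k i, K k i =
      -(((Polynomial.X - Polynomial.C (p : ℚ)) ^ (n + 1 - p - (i : ℕ)) *
          Polynomial.X ^ (i : ℕ)).coeff (k : ℕ))) :
    IsUnit K := by
  have hp : (p : ℚ) ≠ 0 := by exact_mod_cast Nat.one_le_iff_ne_zero.mp hp1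
  refine K.isUnit_of_coeff_mul_X_pow (fun i => -(X - C (p : ℚ)) ^ (n + 1 - p - (i : ℕ)))
    (fun k i => by rw [hK, neg_mul, coeff_neg]) fun i => ?_
  rw [coeff_neg, coeff_zero_eq_eval_zero, eval_pow, eval_sub, eval_X, eval_C, zero_sub]
  exact (neg_ne_zero.mpr (pow_ne_zero _ (neg_ne_zero.mpr hp))).isUnit

/-- For `1 ≤ p ≤ n+1`, the matrix `K^{(p)}` of size `n+2-p` defined by
`K^{(p)}_{ki} = -` (coefficient of `θ^k` in `(θ-p)^{n+1-p-i} θ^i`), which expresses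
`τ^{≥p}(x^{(p)}_k)` in terms of the `a_{i,p+i-1}` via
`-(u u* - p)^{n+1-p-i}(u u*)^i = Σ_k K^{(p)}_{ki} (u u*)^k`, is invertible over `ℚ`. -/
theorem stmt12 (n p : ℕ) (hp1 : 1 ≤ p) (hp2 : p ≤ n + 1)
    (K : Matrix (Fin (n + 2 - p)) (Fin (n + 2 - p)) ℚ)
    (hK : ∀ k i, K k i =
      -(((Polynomial.X - Polynomial.C (p : ℚ)) ^ (n + 1 - p - (i : ℕ)) *
          Polynomial.X ^ (i : ℕ)).coeff (k : ℕ))) :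
    IsUnit K :=
  stmt12_general n p hp1 K hK
end

section
/- Let A = (a_{ij})_{0≤i,j≤n} be a complex matrix with -A almost triangular (a_{ij} = 0 for i > j+1, a_{j+1,j} = 1), and let Ã be the matrix of differential operators with Ã_{ij} = a_{ij} ∂_t^{j-i+1}. Then the differential operator det_right(t∂_t - Ã) ∈ ℂ[t, ∂_t] is uniquely divisible from the right by ∂_t, i.e., there is a unique L ∈ ℂ[t,∂_t] with det_right(t∂_t - Ã) = L · ∂_t. -/
/-- The defining relation of the Weyl algebra `ℂ[t,∂_t]`: `∂ t = t ∂ + 1`. -/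
def WeylRel : FreeAlgebra ℂ Bool → FreeAlgebra ℂ Bool → Prop :=
  fun x y => x = FreeAlgebra.ι ℂ true * FreeAlgebra.ι ℂ false ∧
    y = FreeAlgebra.ι ℂ false * FreeAlgebra.ι ℂ true + 1

/-- The Weyl algebra `ℂ[t,∂_t]` with `∂_t t - t ∂_t = 1`. -/
abbrev Weyl := RingQuot WeylRel

/-- The generator `∂_t` of the Weyl algebra. -/
def pa : Weyl := RingQuot.mkAlgHom ℂ WeylRel (FreeAlgebra.ι ℂ true)

/-- The generator `t` of the Weyl algebra. -/
def tt : Weyl := RingQuot.mkAlgHom ℂ WeylRel (FreeAlgebra.ι ℂ false)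

/-- Given a complex matrix `A` with `-A` almost triangular, the matrix `Ã` of
differential operators with `Ã_{ij} = a_{ij} ∂_t^{j-i+1}` (and `Ã_{ij} = 0` for
`i > j+1`, where `a_{ij} = 0` anyway). -/
noncomputable def Atilde {n : ℕ} (A : Matrix (Fin (n+1)) (Fin (n+1)) ℂ) :
    Matrix (Fin (n+1)) (Fin (n+1)) Weyl :=
  fun i j =>
    if (i : ℕ) ≤ (j : ℕ) + 1 then
      algebraMap ℂ Weyl (A i j) * pa ^ ((j : ℕ) + 1 - (i : ℕ))
    else 0

/-- The matrix `t ∂_t - Ã`. -/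
noncomputable def tdMinus {n : ℕ} (A : Matrix (Fin (n+1)) (Fin (n+1)) ℂ) :
    Matrix (Fin (n+1)) (Fin (n+1)) Weyl :=
  fun i j => (if i = j then tt * pa else 0) - Atilde A i j


/-!
Every element of the Weyl algebra is a combination of normally ordered monomials `t^i ∂_t^j`,
so it can be written `f(t) + L ∂_t`, and `f` is recovered by letting the operator act on the
constant `1 ∈ ℂ[t]`. Each entry of `t∂_t - Ã` maps constants to constants, by `-a_{ij}` on the
subdiagonal and by `0` elsewhere, so `det_right(t∂_t - Ã)` acts on `1` as the determinant of a
strictly subdiagonal scalar matrix, which is zero. Uniqueness holds because `∂_t` is not a right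
zero divisor, as the action `t ↦ x`, `∂_t ↦ ∂_x + y` on `ℂ[x, y]` shows.
-/

open Polynomial

section detRight

variable {R K V F : Type*} [Ring R] [CommRing K] [AddCommGroup V] [Module K V]
  [FunLike F R (Module.End K V)] [RingHomClass F R (Module.End K V)] (ρ : F) {v : V}

theorem map_list_prod_ofFn_apply_eq_prod_smul {m : ℕ} (f : Fin m → R) (e : Fin m → K)
    (hf : ∀ k, ρ (f k) v = e k • v) : ρ (List.ofFn f).prod v = (∏ k, e k) • v := by
  induction m with
  | zero => simp
  | succ m ih =>
    rw [List.ofFn_succ, List.prod_cons, map_mul, Module.End.mul_apply,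
      ih (fun k => f k.succ) (fun k => e k.succ) (fun k => hf k.succ), map_smul, hf,
      smul_smul, Fin.prod_univ_succ, mul_comm]

theorem map_detRight_apply_eq_det_smul {n : ℕ} (M : Matrix (Fin (n + 1)) (Fin (n + 1)) R)
    (E : Matrix (Fin (n + 1)) (Fin (n + 1)) K) (hM : ∀ i j, ρ (M i j) v = E i j • v) :
    ρ (detRight M) v = E.det • v := by
  rw [detRight, map_sum, LinearMap.sum_apply, Matrix.det_apply, Finset.sum_smul]
  refine Finset.sum_congr rfl fun σ _ => ?_
  rw [map_zsmul, LinearMap.smul_apply,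
    map_list_prod_ofFn_apply_eq_prod_smul ρ _ (fun k => E (σ k.rev) k.rev) fun k => hM _ _,
    Fintype.prod_equiv Fin.revPerm (fun k => E (σ k.rev) k.rev) (fun k => E (σ k) k)
      fun _ => rfl, smul_assoc]
  rfl

end detRight

namespace Weyl

theorem pa_mul_tt : pa * tt = tt * pa + 1 := by
  simpa [pa, tt] using RingQuot.mkAlgHom_rel ℂ (s := WeylRel) ⟨rfl, rfl⟩

theorem pa_pow_succ_mul_tt (j : ℕ) :
    pa ^ (j + 1) * tt = tt * pa ^ (j + 1) + ((j : ℂ) + 1) • pa ^ j := by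
  induction j with
  | zero => simpa using pa_mul_tt
  | succ k ih =>
    rw [pow_succ', mul_assoc, ih, mul_add, ← mul_assoc, pa_mul_tt, mul_smul_comm,
      ← pow_succ', add_mul, one_mul, mul_assoc, ← pow_succ']
    push_cast
    module

section lift

variable {B : Type*} [Semiring B] [Algebra ℂ B] (T D : B) (h : D * T = T * D + 1)

noncomputable def lift : Weyl →ₐ[ℂ] B :=
  RingQuot.liftAlgHom ℂ ⟨FreeAlgebra.lift ℂ fun b => if b then D else T, by
    rintro _ _ ⟨rfl, rfl⟩
    simpa using h⟩

@[simp]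
theorem lift_pa : lift T D h pa = D := by
  simp [lift, pa, RingQuot.liftAlgHom_mkAlgHom_apply]

@[simp]
theorem lift_tt : lift T D h tt = T := by
  simp [lift, tt, RingQuot.liftAlgHom_mkAlgHom_apply]

end lift

noncomputable def polyRep : Weyl →ₐ[ℂ] Module.End ℂ ℂ[X] :=
  lift (Algebra.lmul ℂ ℂ[X] X) derivative <| by
    refine LinearMap.ext fun p => ?_
    simp [derivative_mul]
    ring

@[simp]
theorem polyRep_pa : polyRep pa = derivative := lift_pa ..

@[simp]
theorem polyRep_tt : polyRep tt = Algebra.lmul ℂ ℂ[X] X := lift_tt ..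

theorem polyRep_aeval_tt_apply_one (f : ℂ[X]) : polyRep (aeval tt f) 1 = f := by
  rw [← aeval_algHom_apply, polyRep_tt, aeval_algHom_apply, aeval_X_left_apply]
  simp

/-- With `x = X false` and `y = X true`, twisting `∂_x` by `y` makes this action faithful: on `y`
it sends `t ^ i ∂_t ^ j` to the monomial `x ^ i y ^ (j + 1)`. -/
noncomputable def twistedRep : Weyl →ₐ[ℂ] Module.End ℂ (MvPolynomial Bool ℂ) :=
  lift (Algebra.lmul ℂ _ (MvPolynomial.X false))
    ((MvPolynomial.pderiv false).toLinearMap + Algebra.lmul ℂ _ (MvPolynomial.X true)) <| by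
    refine LinearMap.ext fun p => ?_
    simp
    ring

@[simp]
theorem twistedRep_tt : twistedRep tt = Algebra.lmul ℂ _ (MvPolynomial.X false) := lift_tt ..

theorem twistedRep_pa_pow_apply_X_true_pow (j m : ℕ) :
    (twistedRep pa ^ j) (MvPolynomial.X true ^ m) = MvPolynomial.X true ^ (m + j) := by
  induction j with
  | zero => simp
  | succ j ih =>
    rw [pow_succ', Module.End.mul_apply, ih]
    simp [twistedRep, MvPolynomial.pderiv_X]
    ring

noncomputable def normalMonomial (p : ℕ × ℕ) : Weyl := tt ^ p.1 * pa ^ p.2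

theorem twistedRep_normalMonomial_apply_X_true (p : ℕ × ℕ) :
    twistedRep (normalMonomial p) (MvPolynomial.X true) =
      MvPolynomial.X false ^ p.1 * MvPolynomial.X true ^ (p.2 + 1) := by
  have h := twistedRep_pa_pow_apply_X_true_pow p.2 1
  rw [pow_one, add_comm] at h
  rw [normalMonomial, map_mul, map_pow, map_pow, Module.End.mul_apply, h, twistedRep_tt,
    ← map_pow]
  rfl

theorem linearIndependent_X_false_pow_mul_X_true_pow_succ :
    LinearIndependent ℂ fun p : ℕ × ℕ =>
      (MvPolynomial.X false ^ p.1 * MvPolynomial.X true ^ (p.2 + 1) : MvPolynomial Bool ℂ) := by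
  let e : ℕ × ℕ → Bool →₀ ℕ := fun p => Finsupp.single false p.1 + Finsupp.single true (p.2 + 1)
  have he : Function.Injective e := fun p q h => by
    have hf := DFunLike.congr_fun h false
    have ht := DFunLike.congr_fun h true
    simp [e] at hf ht
    exact Prod.ext hf ht
  have hmon : (fun p : ℕ × ℕ =>
      (MvPolynomial.X false ^ p.1 * MvPolynomial.X true ^ (p.2 + 1) : MvPolynomial Bool ℂ)) =
      MvPolynomial.basisMonomials Bool ℂ ∘ e := by
    funext p
    simp [e, MvPolynomial.X_pow_eq_monomial, MvPolynomial.monomial_mul]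
  rw [hmon]
  exact (MvPolynomial.basisMonomials Bool ℂ).linearIndependent.comp e he

theorem span_range_normalMonomial : Submodule.span ℂ (Set.range normalMonomial) = ⊤ := by
  set S := Submodule.span ℂ (Set.range normalMonomial)
  have hmem (i j : ℕ) : tt ^ i * pa ^ j ∈ S := Submodule.subset_span ⟨(i, j), rfl⟩
  have hmul {g : Weyl} (hg : ∀ p, normalMonomial p * g ∈ S) {x : Weyl} (hx : x ∈ S) :
      x * g ∈ S :=
    (Submodule.map_span_le (LinearMap.mulRight ℂ g) _ S).2 (by rintro _ ⟨p, rfl⟩; exact hg p)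
      ⟨x, hx, rfl⟩
  have hpa (p : ℕ × ℕ) : normalMonomial p * pa ∈ S := by
    rw [normalMonomial, mul_assoc, ← pow_succ]
    exact hmem _ _
  -- commuting `t` to the left through `∂_t ^ j` keeps a monomial normally ordered
  have htt (p : ℕ × ℕ) : normalMonomial p * tt ∈ S := by
    obtain ⟨i, _ | j⟩ := p
    · simpa [normalMonomial, ← pow_succ] using hmem (i + 1) 0
    · rw [normalMonomial, mul_assoc, pa_pow_succ_mul_tt, mul_add, ← mul_assoc, ← pow_succ,
        mul_smul_comm]
      exact S.add_mem (hmem _ _) (S.smul_mem _ (hmem _ _))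
  have hright (a : FreeAlgebra ℂ Bool) :
      ∀ x ∈ S, x * RingQuot.mkAlgHom ℂ WeylRel a ∈ S := by
    induction a using FreeAlgebra.induction with
    | grade0 r =>
      intro x hx
      rw [AlgHom.commutes, Algebra.algebraMap_eq_smul_one, mul_smul_comm, mul_one]
      exact S.smul_mem _ hx
    | grade1 b =>
      intro x hx
      cases b
      · exact hmul htt hx
      · exact hmul hpa hx
    | mul a b ha hb =>
      intro x hx
      rw [map_mul, ← mul_assoc]
      exact hb _ (ha _ hx)
    | add a b ha hb =>
      intro x hx
      rw [map_add, mul_add]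
      exact S.add_mem (ha _ hx) (hb _ hx)
  refine eq_top_iff.2 fun x _ => ?_
  obtain ⟨a, rfl⟩ := RingQuot.mkAlgHom_surjective ℂ WeylRel x
  simpa using hright a 1 (by simpa [normalMonomial] using hmem 0 0)

theorem exists_eq_aeval_tt_add_mul_pa (w : Weyl) : ∃ f : ℂ[X], ∃ L, w = aeval tt f + L * pa := by
  have hw : w ∈ Submodule.span ℂ (Set.range normalMonomial) := by
    simp [span_range_normalMonomial]
  induction hw using Submodule.span_induction with
  | mem x hx =>
    obtain ⟨⟨i, _ | j⟩, rfl⟩ := hx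
    · exact ⟨X ^ i, 0, by simp [normalMonomial]⟩
    · exact ⟨0, tt ^ i * pa ^ j, by simp [normalMonomial, pow_succ, mul_assoc]⟩
  | zero => exact ⟨0, 0, by simp⟩
  | add x y _ _ hx hy =>
    obtain ⟨f, L, rfl⟩ := hx
    obtain ⟨g, M, rfl⟩ := hy
    exact ⟨f + g, L + M, by rw [map_add, add_mul]; abel⟩
  | smul c x _ hx =>
    obtain ⟨f, L, rfl⟩ := hx
    exact ⟨c • f, c • L, by rw [map_smul, smul_add, smul_mul_assoc]⟩

theorem exists_eq_mul_pa_of_polyRep_apply_one {w : Weyl} (hw : polyRep w 1 = 0) :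
    ∃ L, w = L * pa := by
  obtain ⟨f, L, rfl⟩ := exists_eq_aeval_tt_add_mul_pa w
  have hf : f = 0 := by
    simpa [polyRep_aeval_tt_apply_one] using hw
  exact ⟨L, by simp [hf]⟩

theorem isRightRegular_pa : IsRightRegular pa := by
  let ψ : Weyl →ₗ[ℂ] MvPolynomial Bool ℂ :=
    LinearMap.applyₗ (MvPolynomial.X true) ∘ₗ twistedRep.toLinearMap
  have hψ : Function.Injective ψ := by
    refine LinearMap.injective_of_linearIndependent span_range_normalMonomial ?_
    have hcomp : ψ ∘ normalMonomial = fun p =>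
        MvPolynomial.X false ^ p.1 * MvPolynomial.X true ^ (p.2 + 1) :=
      funext twistedRep_normalMonomial_apply_X_true
    rw [hcomp]
    exact linearIndependent_X_false_pow_mul_X_true_pow_succ
  have hpa : twistedRep pa 1 = MvPolynomial.X true := by
    simp [twistedRep]
  intro x y hxy
  apply hψ
  have h := congrArg (fun w => twistedRep w 1) hxy
  simpa [ψ, hpa] using h

theorem polyRep_tdMinus_apply_one {n : ℕ} (A : Matrix (Fin (n + 1)) (Fin (n + 1)) ℂ)
    (i j : Fin (n + 1)) :
    polyRep (tdMinus A i j) 1 = (if (i : ℕ) = j + 1 then -A i j else 0) • 1 := by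
  have hdiag : polyRep (if i = j then tt * pa else 0) 1 = 0 := by
    split_ifs <;> simp
  rw [tdMinus, map_sub, LinearMap.sub_apply, hdiag, zero_sub, Atilde]
  split_ifs with hle hsub hsub
  · simp [hsub, Algebra.smul_def]
  · have hpos : 0 < (j : ℕ) + 1 - i := by omega
    simp [Module.End.pow_apply, iterate_derivative_one hpos]
  · omega
  · simp

theorem polyRep_detRight_tdMinus_apply_one {n : ℕ}
    (A : Matrix (Fin (n + 1)) (Fin (n + 1)) ℂ) :
    polyRep (detRight (tdMinus A)) 1 = 0 := by
  rw [map_detRight_apply_eq_det_smul _ _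
    (.of fun i j : Fin (n + 1) => if (i : ℕ) = j + 1 then -A i j else 0)
    (polyRep_tdMinus_apply_one A), Matrix.det_eq_zero_of_column_eq_zero (Fin.last n),
    zero_smul]
  intro i
  simp [i.isLt.ne]

end Weyl

theorem stmt13_general {n : ℕ} (A : Matrix (Fin (n+1)) (Fin (n+1)) ℂ) :
    ∃! L : Weyl, detRight (tdMinus A) = L * pa := by
  obtain ⟨L, hL⟩ :=
    Weyl.exists_eq_mul_pa_of_polyRep_apply_one (Weyl.polyRep_detRight_tdMinus_apply_one A)
  exact ⟨L, hL, fun L' hL' => Weyl.isRightRegular_pa (hL'.symm.trans hL)⟩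

/-- For `A` with `-A` almost triangular, the operator `det_right(t∂_t - Ã)` is uniquely
divisible from the right by `∂_t`: there is a unique `L` with
`det_right(t∂_t - Ã) = L ∂_t`. -/
theorem stmt13 {n : ℕ} (A : Matrix (Fin (n+1)) (Fin (n+1)) ℂ)
    (h0 : ∀ i j : Fin (n+1), (j : ℕ) + 1 < (i : ℕ) → A i j = 0)
    (h1 : ∀ i j : Fin (n+1), (i : ℕ) = (j : ℕ) + 1 → A i j = 1) :
    ∃! L : Weyl, detRight (tdMinus A) = L * pa :=
  stmt13_general A
end

section
/- An operator L = (t∂_t)^n t + Σ_{p=1}^{n+1} g_p(t∂_t)∂_t^{p-1} (with deg g_p ≤ n-p+1) satisfies L^∨ = (-1)^n L if and only if for every p, g_p(x) = (-1)^{n-p+1} g_p(-x-p) as polynomials. -/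
open Polynomial MulOpposite

local notation "θ" => tt * pa

theorem pa_mul_tt : pa * tt = tt * pa + 1 := by
  simpa [pa, tt] using RingQuot.mkAlgHom_rel ℂ (s := WeylRel)
    (x := FreeAlgebra.ι ℂ true * FreeAlgebra.ι ℂ false)
    (y := FreeAlgebra.ι ℂ false * FreeAlgebra.ι ℂ true + 1) ⟨rfl, rfl⟩

theorem SemiconjBy.aeval {R A : Type*} [CommSemiring R] [Semiring A] [Algebra R A] {a x y : A}
    (h : SemiconjBy a x y) (f : R[X]) : SemiconjBy a (aeval x f) (aeval y f) := by
  induction f using Polynomial.induction_on' with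
  | add p q hp hq => simpa only [map_add] using hp.add_right hq
  | monomial k c =>
    simpa only [aeval_monomial] using SemiconjBy.mul_right
      (Algebra.commute_algebraMap_right c a) (h.pow_right k)

theorem semiconjBy_pa_euler : SemiconjBy pa θ (θ + 1) := by
  rw [SemiconjBy, ← mul_assoc, pa_mul_tt]

theorem semiconjBy_tt_euler : SemiconjBy tt (θ + 1) θ := by
  rw [SemiconjBy, ← pa_mul_tt, mul_assoc]

theorem pa_pow_mul_aeval_euler (m : ℕ) (f : ℂ[X]) :
    pa ^ m * aeval θ f = aeval θ (f.comp (X + C (m : ℂ))) * pa ^ m := by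
  induction m generalizing f with
  | zero => simp
  | succ m ih =>
    have hpa : pa * aeval θ f = aeval θ (f.comp (X + 1)) * pa := by
      simpa [aeval_comp] using (semiconjBy_pa_euler.aeval f).eq
    rw [pow_succ, mul_assoc, hpa, ← mul_assoc, ih, mul_assoc, ← pow_succ, comp_assoc]
    simp [add_comp, add_assoc]

def opAlgHomOfAnti {R A : Type*} [CommSemiring R] [Ring A] [Algebra R A] (V : A → A)
    (hadd : ∀ x y, V (x + y) = V x + V y) (hmul : ∀ x y, V (x * y) = V y * V x)
    (halg : ∀ c : R, V (algebraMap R A c) = algebraMap R A c) : A →ₐ[R] Aᵐᵒᵖ where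
  toFun x := op (V x)
  map_one' := by simpa using congrArg op (halg 1)
  map_mul' x y := by simp [hmul]
  map_zero' := by simpa using congrArg op (hadd 0 0)
  map_add' x y := by simp [hadd]
  commutes' c := by simp [halg]

section Transpose

variable {φ : Weyl →ₐ[ℂ] Weylᵐᵒᵖ}

-- `-` on `Weyl` is `RingQuot`'s own negation, which `rw` does not match against the generic
-- ring instances unless the ring lemmas are given their arguments explicitly.
theorem unop_map_euler (ht : φ tt = op tt) (hpa : φ pa = op (-pa)) : unop (φ θ) = -(θ + 1) := by
  rw [map_mul, ht, hpa, unop_mul, unop_op, unop_op, neg_mul pa tt, pa_mul_tt]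

theorem unop_map_euler_pow_mul_tt (ht : φ tt = op tt) (hpa : φ pa = op (-pa)) (n : ℕ) :
    unop (φ (θ ^ n * tt)) = (-1) ^ n * (θ ^ n * tt) := by
  rw [map_mul, map_pow, unop_mul, unop_pow, unop_map_euler ht hpa, ht, unop_op, neg_pow (θ + 1) n,
    ← mul_assoc, ((Commute.neg_one_right tt).pow_right n).eq, mul_assoc,
    (semiconjBy_tt_euler.pow_right n).eq]

theorem unop_map_aeval_euler_mul_pa_pow (ht : φ tt = op tt) (hpa : φ pa = op (-pa))
    (f : ℂ[X]) (k : ℕ) :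
    unop (φ (aeval θ f * pa ^ k)) =
      (-1) ^ k * (aeval θ (f.comp (-X - C ((k + 1 : ℕ) : ℂ))) * pa ^ k) := by
  rw [map_mul, map_pow, ← aeval_algHom_apply, hpa, unop_mul, unop_pow, unop_op, neg_pow pa k]
  have hθ : aeval (-(θ + 1)) f = aeval θ (f.comp (-X - 1)) := by
    rw [aeval_comp, map_sub, map_neg, aeval_X, map_one, neg_add']
  rw [← op_unop (φ θ), aeval_op_apply, unop_op, unop_map_euler ht hpa, hθ, mul_assoc,
    pa_pow_mul_aeval_euler, comp_assoc]
  congr 4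
  simp only [sub_comp, neg_comp, X_comp, one_comp, Nat.cast_succ, C_add, C_1]
  ring

theorem unop_map_aeval_euler_mul_pa_pow_pred (ht : φ tt = op tt) (hpa : φ pa = op (-pa))
    (f : ℂ[X]) {n p : ℕ} (hp1 : 1 ≤ p) (hpn : p ≤ n + 1) :
    unop (φ (aeval θ f * pa ^ (p - 1))) =
      (-1) ^ n * (aeval θ (C ((-1 : ℂ) ^ (n + 1 - p)) * f.comp (-X - C (p : ℂ))) * pa ^ (p - 1)) := by
  have hsign : (-1 : Weyl) ^ n * algebraMap ℂ Weyl ((-1) ^ (n + 1 - p)) = (-1) ^ (p - 1) := by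
    rw [map_pow, map_neg, map_one, ← pow_add,
      show n + (n + 1 - p) = p - 1 + 2 * (n + 1 - p) by omega, pow_add, pow_mul,
      neg_one_sq (R := Weyl), one_pow, mul_one]
  rw [unop_map_aeval_euler_mul_pa_pow ht hpa, Nat.sub_add_cancel hp1, map_mul, aeval_C, ← hsign]
  simp only [mul_assoc]

end Transpose

noncomputable def weylRep : Weyl →ₐ[ℂ] Module.End ℂ ℂ[X] :=
  RingQuot.liftAlgHom ℂ ⟨FreeAlgebra.lift ℂ (fun b => if b then derivative else .mulLeft ℂ X), by
    rintro x y ⟨rfl, rfl⟩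
    refine LinearMap.ext fun f => ?_
    simp [Module.End.mul_apply, derivative_mul, add_comm]⟩

theorem weylRep_tt : weylRep tt = .mulLeft ℂ X := by
  simp [weylRep, tt, RingQuot.liftAlgHom_mkAlgHom_apply]

theorem weylRep_pa : weylRep pa = derivative := by
  simp [weylRep, pa, RingQuot.liftAlgHom_mkAlgHom_apply]

theorem weylRep_euler_X_pow (j : ℕ) : weylRep θ (X ^ j) = (j : ℂ) • X ^ j := by
  rcases j with _ | j
  · simp [weylRep_pa]
  · simp [weylRep_tt, weylRep_pa, smul_eq_C_mul]
    ring

theorem weylRep_aeval_euler_mul_pa_pow_X_pow (f : ℂ[X]) (k N : ℕ) :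
    weylRep (aeval θ f * pa ^ k) (X ^ N) =
      ((N.descFactorial k : ℂ) * f.eval ((N - k : ℕ) : ℂ)) • X ^ (N - k) := by
  rw [map_mul, Module.End.mul_apply, map_pow weylRep, ← aeval_algHom_apply, weylRep_pa,
    Module.End.pow_apply, iterate_derivative_X_pow_eq_smul, map_smul,
    Module.End.aeval_apply_of_mem_apply_eq_smul (weylRep_euler_X_pow _), smul_smul, mul_comm]

theorem eq_zero_of_sum_aeval_euler_mul_pa_pow_eq_zero {s : Finset ℕ} {e : ℕ → ℕ}
    (he : Set.InjOn e s) {f : ℕ → ℂ[X]} (h : ∑ j ∈ s, aeval θ (f j) * pa ^ e j = 0)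
    {k : ℕ} (hk : k ∈ s) : f k = 0 := by
  have hle : ∀ j ∈ s, e j ≤ s.sup e := fun j hj => Finset.le_sup hj
  have hroot : ∀ N, s.sup e ≤ N → (f k).eval ((N - e k : ℕ) : ℂ) = 0 := by
    intro N hN
    have hcoeff := congrArg (fun T => (weylRep T (X ^ N)).coeff (N - e k)) h
    simp only [map_sum, LinearMap.sum_apply, map_zero, LinearMap.zero_apply,
      weylRep_aeval_euler_mul_pa_pow_X_pow, finsetSum_coeff, coeff_smul, coeff_X_pow,
      smul_eq_mul, coeff_zero] at hcoeff
    rw [Finset.sum_eq_single k] at hcoeff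
    · have : (N.descFactorial (e k) : ℂ) ≠ 0 :=
        mod_cast (Nat.descFactorial_pos.mpr ((hle k hk).trans hN)).ne'
      simpa [this] using hcoeff
    · intro j hj hjk
      have : e j ≠ e k := fun hjk' => hjk (he hj hk hjk')
      rw [if_neg (by have := hle j hj; have := hle k hk; omega), mul_zero]
    · exact fun hk' => absurd hk hk'
  refine eq_zero_of_infinite_isRoot _ (Set.infinite_of_injective_forall_mem
    (f := fun j : ℕ => ((s.sup e + j - e k : ℕ) : ℂ)) (fun a b hab => ?_) fun j => ?_)
  · have := hle k hk
    have := Nat.cast_injective hab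
    omega
  · exact hroot _ (Nat.le_add_right _ _)

theorem sum_aeval_euler_mul_pa_pow_inj {s : Finset ℕ} {e : ℕ → ℕ} (he : Set.InjOn e s)
    {f g : ℕ → ℂ[X]} :
    ∑ j ∈ s, aeval θ (f j) * pa ^ e j = ∑ j ∈ s, aeval θ (g j) * pa ^ e j ↔
      ∀ j ∈ s, f j = g j := by
  refine ⟨fun h j hj => sub_eq_zero.mp ?_, fun h => Finset.sum_congr rfl fun j hj => by rw [h j hj]⟩
  refine eq_zero_of_sum_aeval_euler_mul_pa_pow_eq_zero (f := fun j => f j - g j) he ?_ hj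
  simp only [map_sub, sub_mul, Finset.sum_sub_distrib, h, sub_self]

theorem stmt16_general {n : ℕ} (V : Weyl → Weyl)
    (hadd : ∀ x y, V (x + y) = V x + V y)
    (hmul : ∀ x y, V (x * y) = V y * V x)
    (halg : ∀ c : ℂ, V (algebraMap ℂ Weyl c) = algebraMap ℂ Weyl c)
    (ht : V tt = tt) (hpa : V pa = -pa)
    (g : ℕ → Polynomial ℂ)
    (L : Weyl)
    (hLform : L = (tt * pa) ^ n * tt +
      ∑ p ∈ Finset.Icc 1 (n + 1), Polynomial.aeval (tt * pa) (g p) * pa ^ (p - 1)) :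
    V L = (-1 : Weyl) ^ n * L ↔
      ∀ p, 1 ≤ p → p ≤ n + 1 →
        g p = Polynomial.C ((-1 : ℂ) ^ (n + 1 - p)) *
          (g p).comp (-Polynomial.X - Polynomial.C (p : ℂ)) := by
  set φ := opAlgHomOfAnti V hadd hmul halg
  have hφt : φ tt = op tt := congrArg op ht
  have hφpa : φ pa = op (-pa) := congrArg op hpa
  set G : ℕ → ℂ[X] := fun p => C ((-1 : ℂ) ^ (n + 1 - p)) * (g p).comp (-X - C (p : ℂ))
  have hVL : V L = (-1) ^ n * ((tt * pa) ^ n * tt +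
      ∑ p ∈ Finset.Icc 1 (n + 1), aeval θ (G p) * pa ^ (p - 1)) := by
    change unop (φ L) = _
    rw [hLform, map_add, unop_add, unop_map_euler_pow_mul_tt hφt hφpa, map_sum, Finset.unop_sum,
      Finset.sum_congr rfl fun p hp => unop_map_aeval_euler_mul_pa_pow_pred hφt hφpa (g p)
        (Finset.mem_Icc.mp hp).1 (Finset.mem_Icc.mp hp).2, ← Finset.mul_sum, mul_add]
  have hinj : Set.InjOn (· - 1) (Finset.Icc 1 (n + 1) : Set ℕ) := fun a ha b hb hab => by
    simp only [Finset.coe_Icc, Set.mem_Icc] at ha hb hab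
    omega
  rw [hVL, hLform, IsUnit.mul_right_inj (a := (-1 : Weyl) ^ n) ((isUnit_neg_one (α := Weyl)).pow n),
    add_right_inj, sum_aeval_euler_mul_pa_pow_inj hinj]
  simp only [Finset.mem_Icc, G, eq_comm (a := C _ * _)]
  exact ⟨fun h p hp1 hpn => h p ⟨hp1, hpn⟩, fun h p hp => h p hp.1 hp.2⟩

/-- An operator `L = (t∂_t)^n t + Σ_{p=1}^{n+1} g_p(t∂_t) ∂_t^{p-1}` (with
`deg g_p ≤ n-p+1`) satisfies `L^∨ = (-1)^n L` (with `∨` the anti-involution with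
`t^∨ = t`, `∂_t^∨ = -∂_t`) if and only if `g_p(x) = (-1)^{n-p+1} g_p(-x-p)` for all `p`. -/
theorem stmt16 {n : ℕ} (V : Weyl → Weyl)
    (hadd : ∀ x y, V (x + y) = V x + V y)
    (hmul : ∀ x y, V (x * y) = V y * V x)
    (halg : ∀ c : ℂ, V (algebraMap ℂ Weyl c) = algebraMap ℂ Weyl c)
    (ht : V tt = tt) (hpa : V pa = -pa)
    (g : ℕ → Polynomial ℂ)
    (hdeg : ∀ p, 1 ≤ p → p ≤ n + 1 → (g p).natDegree ≤ n + 1 - p)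
    (L : Weyl)
    (hLform : L = (tt * pa) ^ n * tt +
      ∑ p ∈ Finset.Icc 1 (n + 1), Polynomial.aeval (tt * pa) (g p) * pa ^ (p - 1)) :
    V L = (-1 : Weyl) ^ n * L ↔
      ∀ p, 1 ≤ p → p ≤ n + 1 →
        g p = Polynomial.C ((-1 : ℂ) ^ (n + 1 - p)) *
          (g p).comp (-Polynomial.X - Polynomial.C (p : ℂ)) :=
  stmt16_general V hadd hmul halg ht hpa g L hLform
end

section
/- Let A be a diagonalizable complex (n+1)×(n+1) matrix with -A almost triangular and A = A^τ (symmetric about the anti-diagonal), with diagonalization A = C Λ C^{-1}, Λ = diag(λ_0,...,λ_n), normalized so that CᵗJC = I where J is the anti-diagonal permutation matrix. Let T = diag(0,1,...,n) and S_j = -T C E_j C^{-1}, where E_j has a 1 in position (j,j) and zeros elsewhere. Then: (1) each column u_i of C with i ≠ j is an eigenvector of S_j with eigenvalue 0; (2) T u_j is an eigenvector of S_j with eigenvalue -n/2; in particular trace(S_j) = -n/2. -/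
/-!
Since `Cᵀ J C = 1`, `C⁻¹ = Cᵀ J`. The rank-one matrix `S_j = -T C E_j C⁻¹` kills every column
`C e_i` with `i ≠ j`, and maps `T C e_j` to `-(C⁻¹ T C)_{jj} • T C e_j`; by cyclicity its trace is
also `-(C⁻¹ T C)_{jj}`. The matrix `Cᵀ J T C` has the same diagonal as its transpose `Cᵀ T J C`,
and `J T + T J = n J` makes their sum `n Cᵀ J C = n`, so `(C⁻¹ T C)_{jj} = n / 2`.
-/

open Matrix

/-- The anti-diagonal permutation matrix `J`, `J_{ij} = 1` iff `i+j = n`. -/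
def Jmat (n : ℕ) : Matrix (Fin (n+1)) (Fin (n+1)) ℂ :=
  Matrix.of fun i j => if (i : ℕ) + (j : ℕ) = n then 1 else 0

/-- The matrix `T = diag(0,1,…,n)`. -/
def Tmat (n : ℕ) : Matrix (Fin (n+1)) (Fin (n+1)) ℂ :=
  Matrix.diagonal fun i => ((i : ℕ) : ℂ)

section

variable {ι R : Type*} [Fintype ι] [DecidableEq ι] [CommRing R]

lemma mul_single_mul_inv_mulVec_col_of_ne {C : Matrix ι ι R} (hC : IsUnit C.det)
    (P : Matrix ι ι R) {i j : ι} (hij : i ≠ j) :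
    (P * C * single j j 1 * C⁻¹) *ᵥ C.col i = 0 := by
  rw [← mulVec_single_one C i, mulVec_mulVec, nonsing_inv_mul_cancel_right _ _ hC,
    ← mulVec_mulVec, single_mulVec]
  simp [hij.symm]

lemma mul_single_mul_inv_mulVec_mulVec_col (C P : Matrix ι ι R) (j : ι) :
    (P * C * single j j 1 * C⁻¹) *ᵥ (P *ᵥ C.col j) = (C⁻¹ * P * C) j j • (P *ᵥ C.col j) := by
  have hcol : P *ᵥ C.col j = (P * C) *ᵥ Pi.single j 1 := by
    rw [← mulVec_mulVec, mulVec_single_one]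
  have hconj : P * C * single j j 1 * C⁻¹ * (P * C) = P * C * (single j j 1 * (C⁻¹ * P * C)) := by
    simp only [Matrix.mul_assoc]
  rw [hcol, mulVec_mulVec, hconj, ← mulVec_mulVec _ (P * C), ← mulVec_smul]
  congr 1
  ext k
  by_cases hk : k = j <;> simp [hk]

lemma trace_mul_single_mul_inv (C P : Matrix ι ι R) (j : ι) :
    (P * C * single j j 1 * C⁻¹).trace = (C⁻¹ * P * C) j j := by
  rw [trace_mul_cycle, ← Matrix.mul_assoc, trace_mul_single]
  simp

lemma two_mul_transpose_mul_mul_mul_apply_self {J T C : Matrix ι ι R} {c : R}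
    (hJ : Jᵀ = J) (hT : Tᵀ = T) (hJT : J * T + T * J = c • J) (hC : Cᵀ * J * C = 1) (i : ι) :
    2 * (Cᵀ * J * T * C) i i = c := by
  have hflip : (Cᵀ * J * T * C) i i = (Cᵀ * T * J * C) i i := by
    rw [← transpose_apply (Cᵀ * J * T * C)]
    simp only [transpose_mul, transpose_transpose, hJ, hT, Matrix.mul_assoc]
  have hsum : Cᵀ * J * T * C + Cᵀ * T * J * C = c • 1 := by
    rw [← hC, ← Matrix.add_mul, Matrix.mul_assoc, Matrix.mul_assoc, ← Matrix.mul_add, hJT]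
    simp only [Matrix.mul_smul, Matrix.smul_mul]
  calc 2 * (Cᵀ * J * T * C) i i = (c • (1 : Matrix ι ι R)) i i := by
        rw [← hsum, Matrix.add_apply, ← hflip, two_mul]
    _ = c := by simp

end

@[simp]
lemma Jmat_transpose (n : ℕ) : (Jmat n)ᵀ = Jmat n := by
  ext i j
  simp [Jmat, add_comm]

@[simp]
lemma Tmat_transpose (n : ℕ) : (Tmat n)ᵀ = Tmat n := by
  simp [Tmat]

lemma Jmat_mul_Tmat_add_Tmat_mul_Jmat (n : ℕ) :
    Jmat n * Tmat n + Tmat n * Jmat n = (n : ℂ) • Jmat n := by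
  ext i j
  simp only [Jmat, Tmat, Matrix.add_apply, mul_diagonal, diagonal_mul, Matrix.smul_apply,
    of_apply, smul_eq_mul]
  split_ifs with h
  · push_cast [← h]
    ring
  · simp

lemma inv_mul_Tmat_mul_apply_self {n : ℕ} {C : Matrix (Fin (n+1)) (Fin (n+1)) ℂ}
    (hC : Cᵀ * Jmat n * C = 1) (j : Fin (n+1)) :
    (C⁻¹ * Tmat n * C) j j = n / 2 := by
  rw [inv_eq_left_inv hC, eq_div_iff two_ne_zero, mul_comm]
  exact two_mul_transpose_mul_mul_mul_apply_self (Jmat_transpose n) (Tmat_transpose n)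
    (Jmat_mul_Tmat_add_Tmat_mul_Jmat n) hC j

theorem stmt19_general (n : ℕ) (C : Matrix (Fin (n+1)) (Fin (n+1)) ℂ)
    (hnorm : Cᵀ * Jmat n * C = 1)
    (S : Fin (n+1) → Matrix (Fin (n+1)) (Fin (n+1)) ℂ)
    (hS : ∀ j, S j = -(Tmat n * C * Matrix.single j j 1 * C⁻¹)) :
    (∀ i j : Fin (n+1), i ≠ j →
        (S j).mulVec (fun k => C k i) = (0 : ℂ) • (fun k => C k i)) ∧
    (∀ j : Fin (n+1),
        (S j).mulVec ((Tmat n).mulVec (fun k => C k j)) =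
          (-(n / 2 : ℂ)) • (Tmat n).mulVec (fun k => C k j)) ∧
    (∀ j : Fin (n+1), Matrix.trace (S j) = -(n / 2 : ℂ)) := by
  have hdet : IsUnit C.det := isUnit_det_of_left_inverse hnorm
  refine ⟨fun i j hij => ?_, fun j => ?_, fun j => ?_⟩
  · rw [hS, neg_mulVec, zero_smul]
    exact neg_eq_zero.2 (mul_single_mul_inv_mulVec_col_of_ne hdet _ hij)
  · rw [hS, neg_mulVec, neg_smul, ← inv_mul_Tmat_mul_apply_self hnorm j]
    exact congrArg _ (mul_single_mul_inv_mulVec_mulVec_col _ _ _)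
  · rw [hS, trace_neg, trace_mul_single_mul_inv, inv_mul_Tmat_mul_apply_self hnorm]

/-- Let `A` be diagonalizable with `-A` almost triangular and `A = A^τ = J Aᵀ J`,
`A = C Λ C⁻¹` with `Λ = diag(λ)`, normalized so that `Cᵀ J C = 1`. Let
`S_j = -T C E_j C⁻¹`. Then (1) the columns `u_i` of `C` with `i ≠ j` are eigenvectors of
`S_j` with eigenvalue `0`; (2) `T u_j` is an eigenvector of `S_j` with eigenvalue `-n/2`;
in particular `trace(S_j) = -n/2`. -/
theorem stmt19 (n : ℕ) (A C : Matrix (Fin (n+1)) (Fin (n+1)) ℂ) (lam : Fin (n+1) → ℂ)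
    (h0 : ∀ i j : Fin (n+1), (j : ℕ) + 1 < (i : ℕ) → A i j = 0)
    (h1 : ∀ i j : Fin (n+1), (i : ℕ) = (j : ℕ) + 1 → A i j = 1)
    (hC : IsUnit C)
    (hdiag : A = C * Matrix.diagonal lam * C⁻¹)
    (hsym : A = Jmat n * Aᵀ * Jmat n)
    (hnorm : Cᵀ * Jmat n * C = 1)
    (S : Fin (n+1) → Matrix (Fin (n+1)) (Fin (n+1)) ℂ)
    (hS : ∀ j, S j = -(Tmat n * C * Matrix.single j j 1 * C⁻¹)) :
    (∀ i j : Fin (n+1), i ≠ j →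
        (S j).mulVec (fun k => C k i) = (0 : ℂ) • (fun k => C k i)) ∧
    (∀ j : Fin (n+1),
        (S j).mulVec ((Tmat n).mulVec (fun k => C k j)) =
          (-(n / 2 : ℂ)) • (Tmat n).mulVec (fun k => C k j)) ∧
    (∀ j : Fin (n+1), Matrix.trace (S j) = -(n / 2 : ℂ)) :=
  stmt19_general n C hnorm S hS
end
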